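/- arXiv:1611.06932 — 8 statements merged into one kernel-verified Lean document; each statement's English description precedes it below -/
import Mathlib

section
/- Contractivity of the behavior relative entropy under global wirings: for any two no-signaling behaviors P, P' in the (r,s) Bell scenario and any global wiring W from the (r,s) scenario to the (r_f,s_f) scenario, S_b(W(P)‖W(P')) ≤ S_b(P‖P'). -/
open scoped ENNReal
open Finset

/-- A probability distribution on a finite type. -/
def IsDist {Z : Type*} [Fintype Z] (p : Z → ℝ) : Prop :=
  (∀ z, 0 ≤ p z) ∧ ∑ z, p z = 1

/-- Relative entropy (Kullback-Leibler divergence) of finitely supported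
distributions, valued in `[0,∞]`, with the conventions `0·log(0/t) = 0` and
`S(p‖q) = ∞` whenever `q` vanishes at a point where `p` does not. -/
noncomputable def relEnt {Z : Type*} [Fintype Z] (p q : Z → ℝ) : ℝ≥0∞ :=
  if ∃ z, p z ≠ 0 ∧ q z = 0 then ⊤
  else ENNReal.ofReal (∑ z, p z * Real.log (p z / q z))

/-- A behavior in the (r,s) Bell scenario: `P a b x y = P(a,b|x,y)`. -/
def IsBehavior {r s : ℕ} (P : Fin r → Fin r → Fin s → Fin s → ℝ) : Prop :=
  (∀ a b x y, 0 ≤ P a b x y) ∧ ∀ x y, ∑ a, ∑ b, P a b x y = 1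

/-- The no-signaling conditions. -/
def NoSignaling {r s : ℕ} (P : Fin r → Fin r → Fin s → Fin s → ℝ) : Prop :=
  (∀ b x x' y, ∑ a, P a b x y = ∑ a, P a b x' y) ∧
  (∀ a x y y', ∑ b, P a b x y = ∑ b, P a b x y')

/-- Local (local-hidden-variable) behavior. -/
def IsLocal {r s : ℕ} (P : Fin r → Fin r → Fin s → Fin s → ℝ) : Prop :=
  ∃ (n : ℕ) (q : Fin n → ℝ) (PA : Fin r → Fin s → Fin n → ℝ)
    (PB : Fin r → Fin s → Fin n → ℝ),
    IsDist q ∧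
    (∀ x l, (∀ a, 0 ≤ PA a x l) ∧ ∑ a, PA a x l = 1) ∧
    (∀ y l, (∀ b, 0 ≤ PB b y l) ∧ ∑ b, PB b y l = 1) ∧
    (∀ a b x y, P a b x y = ∑ l, q l * PA a x l * PB b y l)

/-- Output distribution `P(·,·|x,y)` of a behavior for fixed inputs. -/
def outDist {r s : ℕ} (P : Fin r → Fin r → Fin s → Fin s → ℝ) (x y : Fin s) :
    Fin r × Fin r → ℝ := fun ab => P ab.1 ab.2 x y

/-- The behavior relative entropy `S_b(P‖P')`: the maximum over input pairs
`(x,y)` of the relative entropy of the output distributions. -/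
noncomputable def Sb {r s : ℕ} (P P' : Fin r → Fin r → Fin s → Fin s → ℝ) : ℝ≥0∞ :=
  Finset.univ.sup fun xy : Fin s × Fin s =>
    relEnt (outDist P xy.1 xy.2) (outDist P' xy.1 xy.2)

/-- A global wiring from the (r,s) scenario to the (rf,sf) scenario. -/
structure GlobalWiring (r s rf sf : ℕ) where
  I : Fin s → Fin s → Fin sf → Fin sf → ℝ          -- I x y χ ψ  =  I(x,y|χ,ψ)
  O : Fin rf → Fin rf → Fin r → Fin r → Fin s → Fin s → Fin sf → Fin sf → ℝ
    -- O α β a b x y χ ψ  =  O(α,β|a,b,x,y,χ,ψ)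
  I_nonneg : ∀ x y χ ψ, 0 ≤ I x y χ ψ
  I_sum : ∀ χ ψ, ∑ x, ∑ y, I x y χ ψ = 1
  O_nonneg : ∀ α β a b x y χ ψ, 0 ≤ O α β a b x y χ ψ
  O_sum : ∀ a b x y χ ψ, ∑ α, ∑ β, O α β a b x y χ ψ = 1

/-- Action of a global wiring on a behavior. -/
noncomputable def GlobalWiring.apply {r s rf sf : ℕ} (W : GlobalWiring r s rf sf)
    (P : Fin r → Fin r → Fin s → Fin s → ℝ) :
    Fin rf → Fin rf → Fin sf → Fin sf → ℝ :=
  fun α β χ ψ => ∑ a, ∑ b, ∑ x, ∑ y,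
    W.O α β a b x y χ ψ * P a b x y * W.I x y χ ψ

/-- LOSR wiring: a global wiring whose input and output boxes are local. -/
def GlobalWiring.IsLOSR {r s rf sf : ℕ} (W : GlobalWiring r s rf sf) : Prop :=
  ∃ (n m : ℕ) (q : Fin n → ℝ) (q' : Fin m → ℝ)
    (IA : Fin s → Fin sf → Fin n → ℝ) (IB : Fin s → Fin sf → Fin n → ℝ)
    (OA : Fin rf → Fin r → Fin s → Fin sf → Fin m → ℝ)
    (OB : Fin rf → Fin r → Fin s → Fin sf → Fin m → ℝ),
    IsDist q ∧ IsDist q' ∧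
    (∀ χ l, (∀ x, 0 ≤ IA x χ l) ∧ ∑ x, IA x χ l = 1) ∧
    (∀ ψ l, (∀ y, 0 ≤ IB y ψ l) ∧ ∑ y, IB y ψ l = 1) ∧
    (∀ a x χ u, (∀ α, 0 ≤ OA α a x χ u) ∧ ∑ α, OA α a x χ u = 1) ∧
    (∀ b y ψ u, (∀ β, 0 ≤ OB β b y ψ u) ∧ ∑ β, OB β b y ψ u = 1) ∧
    (∀ x y χ ψ, W.I x y χ ψ = ∑ l, q l * IA x χ l * IB y ψ l) ∧
    (∀ α β a b x y χ ψ,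
      W.O α β a b x y χ ψ = ∑ u, q' u * OA α a x χ u * OB β b y ψ u)

/-- UCLOSR wiring: a global wiring whose input and output boxes are products. -/
def GlobalWiring.IsUCLOSR {r s rf sf : ℕ} (W : GlobalWiring r s rf sf) : Prop :=
  ∃ (IA : Fin s → Fin sf → ℝ) (IB : Fin s → Fin sf → ℝ)
    (OA : Fin rf → Fin r → Fin s → Fin sf → ℝ)
    (OB : Fin rf → Fin r → Fin s → Fin sf → ℝ),
    (∀ χ, (∀ x, 0 ≤ IA x χ) ∧ ∑ x, IA x χ = 1) ∧
    (∀ ψ, (∀ y, 0 ≤ IB y ψ) ∧ ∑ y, IB y ψ = 1) ∧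
    (∀ a x χ, (∀ α, 0 ≤ OA α a x χ) ∧ ∑ α, OA α a x χ = 1) ∧
    (∀ b y ψ, (∀ β, 0 ≤ OB β b y ψ) ∧ ∑ β, OB β b y ψ = 1) ∧
    (∀ x y χ ψ, W.I x y χ ψ = IA x χ * IB y ψ) ∧
    (∀ α β a b x y χ ψ, W.O α β a b x y χ ψ = OA α a x χ * OB β b y ψ)

/-- The relative entropy of nonlocality `S_nl`. -/
noncomputable def Snl {r s : ℕ} (P : Fin r → Fin r → Fin s → Fin s → ℝ) : ℝ≥0∞ :=
  ⨅ (Q : Fin r → Fin r → Fin s → Fin s → ℝ) (_ : IsBehavior Q ∧ IsLocal Q), Sb P Q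

/-- The uniform-input statistical strength `S_u`. -/
noncomputable def Su {r s : ℕ} (P : Fin r → Fin r → Fin s → Fin s → ℝ) : ℝ≥0∞ :=
  ⨅ (Q : Fin r → Fin r → Fin s → Fin s → ℝ) (_ : IsBehavior Q ∧ IsLocal Q),
    ((s : ℝ≥0∞) ^ 2)⁻¹ * ∑ x, ∑ y, relEnt (outDist P x y) (outDist Q x y)

/-- The uncorrelated-input statistical strength `S_uc`. -/
noncomputable def Suc {r s : ℕ} (P : Fin r → Fin r → Fin s → Fin s → ℝ) : ℝ≥0∞ :=
  ⨆ (DA : Fin s → ℝ) (DB : Fin s → ℝ) (_ : IsDist DA ∧ IsDist DB),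
    ⨅ (Q : Fin r → Fin r → Fin s → Fin s → ℝ) (_ : IsBehavior Q ∧ IsLocal Q),
      ∑ x, ∑ y, ENNReal.ofReal (DA x * DB y) *
        relEnt (outDist P x y) (outDist Q x y)


private lemma cancel_log (c u v : ℝ) (hc : 0 ≤ c) :
    c * u * Real.log (c * u / (c * v)) = c * (u * Real.log (u / v)) := by
  rcases hc.eq_or_lt with h | h
  · simp [← h]
  · rw [mul_div_mul_left _ _ h.ne']
    ring

private lemma log_sum_ineq {ι : Type*} (t : Finset ι) (f g : ι → ℝ)
    (hf : ∀ i ∈ t, 0 ≤ f i) (hg : ∀ i ∈ t, 0 ≤ g i)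
    (hd : ∀ i ∈ t, g i = 0 → f i = 0) :
    (∑ i ∈ t, f i) * Real.log ((∑ i ∈ t, f i) / (∑ i ∈ t, g i)) ≤
      ∑ i ∈ t, f i * Real.log (f i / g i) := by
  rcases (Finset.sum_nonneg hg).eq_or_lt with hG | hG
  · have hgz : ∀ i ∈ t, g i = 0 := by
      intro i hi
      exact ((Finset.sum_eq_zero_iff_of_nonneg hg).mp hG.symm) i hi
    have hz : ∀ i ∈ t, f i = 0 := fun i hi => hd i hi (hgz i hi)
    have h1 : ∑ i ∈ t, f i = 0 := Finset.sum_eq_zero hz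
    have h2 : ∑ i ∈ t, f i * Real.log (f i / g i) = 0 :=
      Finset.sum_eq_zero fun i hi => by rw [hz i hi, zero_mul]
    rw [h1, h2, zero_mul]
  · set G := ∑ i ∈ t, g i with hGdef
    set x : ι → ℝ := fun i => if g i = 0 then 0 else f i / g i with hx
    have hw0 : ∀ i ∈ t, 0 ≤ g i / G := fun i hi => div_nonneg (hg i hi) hG.le
    have hw1 : ∑ i ∈ t, g i / G = 1 := by rw [← Finset.sum_div, div_self hG.ne']
    have hmem : ∀ i ∈ t, x i ∈ Set.Ici (0:ℝ) := by
      intro i hi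
      simp only [hx, Set.mem_Ici]
      split
      · exact le_refl 0
      · exact div_nonneg (hf i hi) (hg i hi)
    have key := Real.convexOn_mul_log.map_sum_le hw0 hw1 hmem
    simp only [smul_eq_mul] at key
    have e1 : ∑ i ∈ t, g i / G * x i = (∑ i ∈ t, f i) / G := by
      rw [Finset.sum_div]
      refine Finset.sum_congr rfl fun i hi => ?_
      simp only [hx]
      split
      · rename_i h
        rw [hd i hi h]
        simp
      · rename_i h
        field_simp
    have e2 : ∑ i ∈ t, g i / G * (x i * Real.log (x i)) =
        (∑ i ∈ t, f i * Real.log (f i / g i)) / G := by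
      rw [Finset.sum_div]
      refine Finset.sum_congr rfl fun i hi => ?_
      simp only [hx]
      split
      · rename_i h
        rw [hd i hi h]
        simp
      · rename_i h
        field_simp
    rw [e1, e2] at key
    have h2 := mul_le_mul_of_nonneg_right key hG.le
    rw [div_mul_cancel₀ _ hG.ne'] at h2
    calc (∑ i ∈ t, f i) * Real.log ((∑ i ∈ t, f i) / G)
        = (∑ i ∈ t, f i) / G * Real.log ((∑ i ∈ t, f i) / G) * G := by
          field_simp
      _ ≤ _ := h2


private lemma relEnt_step {w k : Type*} [Fintype w] [Fintype k] (p q : w → k → ℝ)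
    (hp : ∀ i j, 0 ≤ p i j) (hq : ∀ i j, 0 ≤ q i j)
    (hd : ∀ i j, q i j = 0 → p i j = 0) :
    ∑ j, (∑ i, p i j) * Real.log ((∑ i, p i j) / (∑ i, q i j)) ≤
      ∑ j, ∑ i, p i j * Real.log (p i j / q i j) :=
  Finset.sum_le_sum fun j _ =>
    log_sum_ineq Finset.univ (fun i => p i j) (fun i => q i j)
      (fun i _ => hp i j) (fun i _ => hq i j) (fun i _ => hd i j)

/-- contractivity of the behavior relative entropy under
global wirings. -/
theorem Sb_contractive_GW {r s rf sf : ℕ}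
    (P P' : Fin r → Fin r → Fin s → Fin s → ℝ)
    (hP : IsBehavior P) (hP' : IsBehavior P')
    (hPns : NoSignaling P) (hP'ns : NoSignaling P')
    (W : GlobalWiring r s rf sf) :
    Sb (W.apply P) (W.apply P') ≤ Sb P P' := by
  by_cases htop : Sb P P' = ⊤
  · rw [htop]; exact le_top
  -- dominance of P by P'
  have hdom : ∀ a b x y, P' a b x y = 0 → P a b x y = 0 := by
    intro a b x y hP'0
    by_contra hP0
    apply htop
    have hT : relEnt (outDist P x y) (outDist P' x y) = ⊤ := by
      rw [relEnt, if_pos]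
      exact ⟨(a, b), hP0, hP'0⟩
    refine eq_top_iff.2 ?_
    calc (⊤ : ℝ≥0∞) = relEnt (outDist P x y) (outDist P' x y) := hT.symm
      _ ≤ Sb P P' := Finset.le_sup (f := fun xy : Fin s × Fin s =>
          relEnt (outDist P xy.1 xy.2) (outDist P' xy.1 xy.2)) (Finset.mem_univ (x, y))
  rw [Sb]
  apply Finset.sup_le
  rintro ⟨χ, ψ⟩ -
  have hs : s ≠ 0 := by
    intro hs
    subst hs
    simpa using W.I_sum χ ψ
  haveI : NeZero s := ⟨hs⟩
  -- per-input real relative entropies and their maximum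
  set Sxy : Fin s × Fin s → ℝ := fun xy =>
    ∑ ab : Fin r × Fin r, P ab.1 ab.2 xy.1 xy.2 *
      Real.log (P ab.1 ab.2 xy.1 xy.2 / P' ab.1 ab.2 xy.1 xy.2) with hSdef
  obtain ⟨xy₀, -, hxy₀⟩ := Finset.exists_mem_eq_sup' (Finset.univ_nonempty
    (α := Fin s × Fin s)) Sxy
  have hM : ∀ xy : Fin s × Fin s, Sxy xy ≤ Sxy xy₀ := fun xy =>
    hxy₀ ▸ Finset.le_sup' Sxy (Finset.mem_univ xy)
  -- the joint distributions
  set p : ((Fin r × Fin r) × (Fin s × Fin s)) → (Fin rf × Fin rf) → ℝ :=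
    fun w z => W.O z.1 z.2 w.1.1 w.1.2 w.2.1 w.2.2 χ ψ *
      P w.1.1 w.1.2 w.2.1 w.2.2 * W.I w.2.1 w.2.2 χ ψ with hpdef
  set q : ((Fin r × Fin r) × (Fin s × Fin s)) → (Fin rf × Fin rf) → ℝ :=
    fun w z => W.O z.1 z.2 w.1.1 w.1.2 w.2.1 w.2.2 χ ψ *
      P' w.1.1 w.1.2 w.2.1 w.2.2 * W.I w.2.1 w.2.2 χ ψ with hqdef
  have hp0 : ∀ w z, 0 ≤ p w z := fun w z =>
    mul_nonneg (mul_nonneg (W.O_nonneg _ _ _ _ _ _ _ _) (hP.1 _ _ _ _))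
      (W.I_nonneg _ _ _ _)
  have hq0 : ∀ w z, 0 ≤ q w z := fun w z =>
    mul_nonneg (mul_nonneg (W.O_nonneg _ _ _ _ _ _ _ _) (hP'.1 _ _ _ _))
      (W.I_nonneg _ _ _ _)
  have hdwz : ∀ w z, q w z = 0 → p w z = 0 := by
    intro w z hqw
    simp only [hqdef] at hqw
    simp only [hpdef]
    rcases mul_eq_zero.mp hqw with h1 | hI
    · rcases mul_eq_zero.mp h1 with hO | hP'0
      · rw [hO, zero_mul, zero_mul]
      · rw [hdom _ _ _ _ hP'0, mul_zero, zero_mul]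
    · rw [hI, mul_zero]
  have hpE : ∀ z : Fin rf × Fin rf, outDist (W.apply P) χ ψ z = ∑ w, p w z := by
    intro z
    simp only [hpdef, outDist, GlobalWiring.apply, Fintype.sum_prod_type]
  have hqE : ∀ z : Fin rf × Fin rf, outDist (W.apply P') χ ψ z = ∑ w, q w z := by
    intro z
    simp only [hqdef, outDist, GlobalWiring.apply, Fintype.sum_prod_type]
  -- no vanishing-denominator points for the wired behaviors
  have hWdom : ∀ z : Fin rf × Fin rf, outDist (W.apply P') χ ψ z = 0 →
      outDist (W.apply P) χ ψ z = 0 := by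
    intro z hz
    rw [hqE z] at hz
    have hq0' := (Finset.sum_eq_zero_iff_of_nonneg fun w _ => hq0 w z).mp hz
    rw [hpE z]
    exact Finset.sum_eq_zero fun w hw => hdwz w z (hq0' w hw)
  have hnot : ¬ ∃ z, outDist (W.apply P) χ ψ z ≠ 0 ∧ outDist (W.apply P') χ ψ z = 0 := by
    rintro ⟨z, h1, h2⟩
    exact h1 (hWdom z h2)
  have hnot' : ¬ ∃ z, outDist P xy₀.1 xy₀.2 z ≠ 0 ∧ outDist P' xy₀.1 xy₀.2 z = 0 := by
    rintro ⟨z, h1, h2⟩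
    exact h1 (hdom _ _ _ _ h2)
  -- main real inequality
  have hIsum : ∑ xy : Fin s × Fin s, W.I xy.1 xy.2 χ ψ = 1 := by
    rw [Fintype.sum_prod_type]
    exact W.I_sum χ ψ
  have key : (∑ z : Fin rf × Fin rf, outDist (W.apply P) χ ψ z *
      Real.log (outDist (W.apply P) χ ψ z / outDist (W.apply P') χ ψ z)) ≤ Sxy xy₀ := by
    have step1 : (∑ z : Fin rf × Fin rf, outDist (W.apply P) χ ψ z *
        Real.log (outDist (W.apply P) χ ψ z / outDist (W.apply P') χ ψ z))
        = ∑ z : Fin rf × Fin rf, (∑ w, p w z) * Real.log ((∑ w, p w z) / (∑ w, q w z)) :=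
      Finset.sum_congr rfl fun z _ => by rw [hpE z, hqE z]
    have step2 := relEnt_step p q hp0 hq0 hdwz
    have step3 : (∑ z : Fin rf × Fin rf,
        ∑ w : (Fin r × Fin r) × (Fin s × Fin s), p w z * Real.log (p w z / q w z))
        = ∑ xy : Fin s × Fin s, W.I xy.1 xy.2 χ ψ * Sxy xy := by
      rw [Finset.sum_comm]
      have hw : ∀ w : (Fin r × Fin r) × (Fin s × Fin s),
          (∑ z : Fin rf × Fin rf, p w z * Real.log (p w z / q w z))
            = W.I w.2.1 w.2.2 χ ψ * (P w.1.1 w.1.2 w.2.1 w.2.2 *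
                Real.log (P w.1.1 w.1.2 w.2.1 w.2.2 / P' w.1.1 w.1.2 w.2.1 w.2.2)) := by
        rintro ⟨⟨a, b⟩, ⟨x, y⟩⟩
        have hOsum : ∑ z : Fin rf × Fin rf, W.O z.1 z.2 a b x y χ ψ = 1 := by
          rw [Fintype.sum_prod_type]
          exact W.O_sum a b x y χ ψ
        have hterm : ∀ z : Fin rf × Fin rf,
            p ((a, b), (x, y)) z * Real.log (p ((a, b), (x, y)) z / q ((a, b), (x, y)) z)
            = W.O z.1 z.2 a b x y χ ψ * ((P a b x y * W.I x y χ ψ) *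
                Real.log ((P a b x y * W.I x y χ ψ) / (P' a b x y * W.I x y χ ψ))) := by
          intro z
          simp only [hpdef, hqdef]
          rw [mul_assoc (W.O z.1 z.2 a b x y χ ψ) (P a b x y),
            mul_assoc (W.O z.1 z.2 a b x y χ ψ) (P' a b x y)]
          exact cancel_log _ _ _ (W.O_nonneg _ _ _ _ _ _ _ _)
        rw [Finset.sum_congr rfl fun z _ => hterm z, ← Finset.sum_mul, hOsum, one_mul]
        rw [mul_comm (P a b x y) (W.I x y χ ψ), mul_comm (P' a b x y) (W.I x y χ ψ)]
        exact cancel_log _ _ _ (W.I_nonneg _ _ _ _)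
      rw [Finset.sum_congr rfl fun w _ => hw w, Fintype.sum_prod_type_right]
      exact Finset.sum_congr rfl fun xy _ => by simp [hSdef, Finset.mul_sum]
    have step4 : (∑ xy : Fin s × Fin s, W.I xy.1 xy.2 χ ψ * Sxy xy) ≤ Sxy xy₀ := by
      calc ∑ xy : Fin s × Fin s, W.I xy.1 xy.2 χ ψ * Sxy xy
          ≤ ∑ xy : Fin s × Fin s, W.I xy.1 xy.2 χ ψ * Sxy xy₀ :=
            Finset.sum_le_sum fun xy _ =>
              mul_le_mul_of_nonneg_left (hM xy) (W.I_nonneg _ _ _ _)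
        _ = Sxy xy₀ := by rw [← Finset.sum_mul, hIsum, one_mul]
    calc (∑ z : Fin rf × Fin rf, outDist (W.apply P) χ ψ z *
          Real.log (outDist (W.apply P) χ ψ z / outDist (W.apply P') χ ψ z))
        = _ := step1
      _ ≤ _ := step2
      _ = _ := step3
      _ ≤ _ := step4
  -- assemble
  have hfin : relEnt (outDist P xy₀.1 xy₀.2) (outDist P' xy₀.1 xy₀.2)
      = ENNReal.ofReal (Sxy xy₀) := by
    rw [relEnt, if_neg hnot']
    simp only [hSdef, outDist]
  rw [relEnt, if_neg hnot]
  calc ENNReal.ofReal (∑ z : Fin rf × Fin rf, outDist (W.apply P) χ ψ z *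
        Real.log (outDist (W.apply P) χ ψ z / outDist (W.apply P') χ ψ z))
      ≤ ENNReal.ofReal (Sxy xy₀) := ENNReal.ofReal_le_ofReal key
    _ = relEnt (outDist P xy₀.1 xy₀.2) (outDist P' xy₀.1 xy₀.2) := hfin.symm
    _ ≤ Sb P P' := Finset.le_sup (f := fun xy : Fin s × Fin s =>
        relEnt (outDist P xy.1 xy.2) (outDist P' xy.1 xy.2)) (Finset.mem_univ xy₀)
end

section
/- Contractivity of the behavior relative entropy under LOSR wirings: for any two no-signaling behaviors P, P' in the (r,s) Bell scenario and any LOSR wiring W from the (r,s) scenario to the (r_f,s_f) scenario, S_b(W(P)‖W(P')) ≤ S_b(P‖P'). -/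
/-!
For fixed outer inputs `(χ, ψ)`, a global wiring first samples `(x, y)` from `I(·,·|χ,ψ)`, feeds
it to the box, and then post-processes the joint record `(a, b, x, y)` through the stochastic map
`O(·,·|a,b,x,y,χ,ψ)`. By the data-processing inequality (a consequence of the log-sum
inequality), the relative entropy of the outputs is at most that of the joint records, which is
the `I`-average of the relative entropies `S(P(·,·|x,y) ‖ P'(·,·|x,y))`, hence at most their
maximum `S_b(P ‖ P')`.
-/

open scoped ENNReal
open Finset

open Real

theorem sum_mul_log_sum_div_sum_le {ι : Type*} [Fintype ι] {a b : ι → ℝ}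
    (ha : ∀ i, 0 ≤ a i) (hb : ∀ i, 0 ≤ b i) (hab : ∀ i, b i = 0 → a i = 0) :
    (∑ i, a i) * log ((∑ i, a i) / ∑ i, b i) ≤ ∑ i, a i * log (a i / b i) := by
  set B := ∑ i, b i
  rcases (sum_nonneg fun i _ => hb i).eq_or_lt with hB | hB
  · have hb0 : ∀ i, b i = 0 := fun i =>
      (sum_eq_zero_iff_of_nonneg fun i _ => hb i).1 hB.symm i (mem_univ i)
    simp [fun i => hab i (hb0 i)]
  have hweight : ∀ i, b i / B * (a i / b i) = a i / B := fun i => by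
    rcases eq_or_ne (b i) 0 with h | h
    · simp [h, hab i h]
    · field_simp
  have jensen := convexOn_mul_log.map_sum_le (t := univ) (w := fun i => b i / B)
    (p := fun i => a i / b i) (fun i _ => div_nonneg (hb i) hB.le)
    (by rw [← sum_div, div_self hB.ne']) (fun i _ => div_nonneg (ha i) (hb i))
  have hterm : ∀ i, b i / B * (a i / b i * log (a i / b i)) = a i * log (a i / b i) / B :=
    fun i => by rw [← mul_assoc, hweight, div_mul_eq_mul_div]
  simp only [smul_eq_mul] at jensen
  rwa [sum_congr rfl fun i _ => hweight i, sum_congr rfl fun i _ => hterm i, ← sum_div, ← sum_div,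
    div_mul_eq_mul_div, div_le_div_iff_of_pos_right hB] at jensen

section RelEnt

variable {X Y Z : Type*} [Fintype X] [Fintype Y] [Fintype Z]

theorem relEnt_of_absCont {p q : Z → ℝ} (h : ∀ z, q z = 0 → p z = 0) :
    relEnt p q = ENNReal.ofReal (∑ z, p z * log (p z / q z)) :=
  if_neg fun ⟨z, hp, hq⟩ => hp (h z hq)

theorem relEnt_eq_top {p q : Z → ℝ} {z : Z} (hp : p z ≠ 0) (hq : q z = 0) : relEnt p q = ⊤ :=
  if_pos ⟨z, hp, hq⟩

theorem relEnt_map_le {K : Y → Z → ℝ} (hK : ∀ y z, 0 ≤ K y z) (hK1 : ∀ y, ∑ z, K y z = 1)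
    {p q : Y → ℝ} (hp : ∀ y, 0 ≤ p y) (hq : ∀ y, 0 ≤ q y) :
    relEnt (fun z => ∑ y, K y z * p y) (fun z => ∑ y, K y z * q y) ≤ relEnt p q := by
  by_cases hac : ∀ y, q y = 0 → p y = 0
  swap
  · push Not at hac
    obtain ⟨y, hq0, hp0⟩ := hac
    rw [relEnt_eq_top hp0 hq0]
    exact le_top
  have hKac : ∀ z y, K y z * q y = 0 → K y z * p y = 0 := fun z y h => by
    rcases mul_eq_zero.1 h with h | h <;> simp [h, hac]
  have hac' : ∀ z, ∑ y, K y z * q y = 0 → ∑ y, K y z * p y = 0 := fun z h =>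
    sum_eq_zero fun y _ => hKac z y
      ((sum_eq_zero_iff_of_nonneg fun y _ => mul_nonneg (hK y z) (hq y)).1 h y (mem_univ y))
  have hcancel : ∀ z y, K y z * p y * log (K y z * p y / (K y z * q y)) =
      K y z * (p y * log (p y / q y)) := fun z y => by
    rcases eq_or_ne (K y z) 0 with h | h
    · simp [h]
    · rw [mul_div_mul_left _ _ h, mul_assoc]
  rw [relEnt_of_absCont hac, relEnt_of_absCont hac']
  apply ENNReal.ofReal_le_ofReal
  calc ∑ z, (∑ y, K y z * p y) * log ((∑ y, K y z * p y) / ∑ y, K y z * q y)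
      ≤ ∑ z, ∑ y, K y z * p y * log (K y z * p y / (K y z * q y)) :=
        sum_le_sum fun z _ => sum_mul_log_sum_div_sum_le (fun y => mul_nonneg (hK y z) (hp y))
          (fun y => mul_nonneg (hK y z) (hq y)) (hKac z)
    _ = ∑ y, p y * log (p y / q y) := by
        simp_rw [hcancel]
        rw [sum_comm]
        simp_rw [← sum_mul, hK1, one_mul]

theorem relEnt_joint_le_sup {w : X → ℝ} (hw : ∀ x, 0 ≤ w x) (hw1 : ∑ x, w x = 1)
    (p q : X → Y → ℝ) :
    relEnt (fun yx : Y × X => p yx.2 yx.1 * w yx.2) (fun yx => q yx.2 yx.1 * w yx.2) ≤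
      univ.sup fun x => relEnt (p x) (q x) := by
  by_cases hac : ∀ x y, q x y = 0 → p x y = 0
  swap
  · push Not at hac
    obtain ⟨x, y, hq0, hp0⟩ := hac
    calc _ ≤ ⊤ := le_top
      _ = relEnt (p x) (q x) := (relEnt_eq_top hp0 hq0).symm
      _ ≤ _ := le_sup (f := fun x => relEnt (p x) (q x)) (mem_univ x)
  have hac' : ∀ yx : Y × X, q yx.2 yx.1 * w yx.2 = 0 → p yx.2 yx.1 * w yx.2 = 0 := fun yx h => by
    rcases mul_eq_zero.1 h with h | h <;> simp [h, hac]
  set D : X → ℝ := fun x => ∑ y, p x y * log (p x y / q x y)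
  have hcancel : ∀ x y, p x y * w x * log (p x y * w x / (q x y * w x)) =
      w x * (p x y * log (p x y / q x y)) := fun x y => by
    rcases eq_or_ne (w x) 0 with h | h
    · simp [h]
    · rw [mul_div_mul_right _ _ h]
      ring
  have : Nonempty X := by
    by_contra hX
    simp [not_nonempty_iff.1 hX] at hw1
  obtain ⟨x₀, hx₀⟩ := Finite.exists_max D
  rw [relEnt_of_absCont hac']
  calc ENNReal.ofReal (∑ yx : Y × X, p yx.2 yx.1 * w yx.2 *
        log (p yx.2 yx.1 * w yx.2 / (q yx.2 yx.1 * w yx.2)))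
      = ENNReal.ofReal (∑ x, w x * D x) := by
        rw [Fintype.sum_prod_type, sum_comm]
        simp_rw [hcancel, D, mul_sum]
    _ ≤ ENNReal.ofReal (D x₀) := by
        apply ENNReal.ofReal_le_ofReal
        calc ∑ x, w x * D x ≤ ∑ x, w x * D x₀ :=
              sum_le_sum fun x _ => mul_le_mul_of_nonneg_left (hx₀ x) (hw x)
          _ = D x₀ := by rw [← sum_mul, hw1, one_mul]
    _ = relEnt (p x₀) (q x₀) := (relEnt_of_absCont (hac x₀)).symm
    _ ≤ _ := le_sup (f := fun x => relEnt (p x) (q x)) (mem_univ x₀)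

end RelEnt

theorem GlobalWiring.outDist_apply {r s rf sf : ℕ} (W : GlobalWiring r s rf sf)
    (P : Fin r → Fin r → Fin s → Fin s → ℝ) (χ ψ : Fin sf) :
    outDist (W.apply P) χ ψ = fun αβ => ∑ abxy : (Fin r × Fin r) × Fin s × Fin s,
      W.O αβ.1 αβ.2 abxy.1.1 abxy.1.2 abxy.2.1 abxy.2.2 χ ψ *
        (outDist P abxy.2.1 abxy.2.2 abxy.1 * W.I abxy.2.1 abxy.2.2 χ ψ) := by
  funext αβ
  simp only [outDist, GlobalWiring.apply, Fintype.sum_prod_type, mul_assoc]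

theorem Sb_contractive_LOSR_general {r s rf sf : ℕ}
    (P P' : Fin r → Fin r → Fin s → Fin s → ℝ)
    (hP : IsBehavior P) (hP' : IsBehavior P')
    (W : GlobalWiring r s rf sf) :
    Sb (W.apply P) (W.apply P') ≤ Sb P P' := by
  refine Finset.sup_le fun ⟨χ, ψ⟩ _ => ?_
  rw [W.outDist_apply P χ ψ, W.outDist_apply P' χ ψ]
  have hO : ∀ abxy : (Fin r × Fin r) × Fin s × Fin s,
      ∑ αβ : Fin rf × Fin rf, W.O αβ.1 αβ.2 abxy.1.1 abxy.1.2 abxy.2.1 abxy.2.2 χ ψ = 1 :=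
    fun _ => (Fintype.sum_prod_type _).trans (W.O_sum _ _ _ _ _ _)
  have hI : ∑ xy : Fin s × Fin s, W.I xy.1 xy.2 χ ψ = 1 :=
    (Fintype.sum_prod_type _).trans (W.I_sum χ ψ)
  exact (relEnt_map_le (fun _ _ => W.O_nonneg ..) hO
      (fun _ => mul_nonneg (hP.1 ..) (W.I_nonneg ..))
      (fun _ => mul_nonneg (hP'.1 ..) (W.I_nonneg ..))).trans
    (relEnt_joint_le_sup (fun _ => W.I_nonneg ..) hI
      (fun xy => outDist P xy.1 xy.2) (fun xy => outDist P' xy.1 xy.2))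

/-- contractivity of the behavior relative entropy under
LOSR wirings. -/
theorem Sb_contractive_LOSR {r s rf sf : ℕ}
    (P P' : Fin r → Fin r → Fin s → Fin s → ℝ)
    (hP : IsBehavior P) (hP' : IsBehavior P')
    (hPns : NoSignaling P) (hP'ns : NoSignaling P')
    (W : GlobalWiring r s rf sf) (hW : W.IsLOSR) :
    Sb (W.apply P) (W.apply P') ≤ Sb P P' :=
  Sb_contractive_LOSR_general P P' hP hP' W
end

section
/- A prior-to-input-communication wiring doubles the behavior relative entropy: with P₀, P₀', P_f, P_f' as in the explicit ε-parametrized construction, S(P_f‖P_f') = 2 · max_{x∈{0,1}} S(P₀(·,·|x)‖P₀'(·,·|x)); in particular, if moreover ε ≠ 1/4, then S(P_f‖P_f') > max_{x∈{0,1}} S(P₀(·,·|x)‖P₀'(·,·|x)). -/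
open scoped ENNReal
open Finset

/-- The behavior `P₀(a,b|x)` of the ε-parametrized example. -/
noncomputable def Pzero (ε : ℝ) : Fin 2 → Fin 2 → Fin 2 → ℝ :=
  fun a b _ => if a = b then 1 / 2 - ε else ε

/-- The behavior `P₀'(a,b|x)` of the ε-parametrized example. -/
noncomputable def Pzero' (ε : ℝ) : Fin 2 → Fin 2 → Fin 2 → ℝ :=
  fun a _ x => if a = x then ε else 1 / 2 - ε

/-- The wired distribution `P_f(a,b) = P₀(a,b|x=b)`. -/
noncomputable def PzeroF (ε : ℝ) : Fin 2 × Fin 2 → ℝ :=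
  fun ab => Pzero ε ab.1 ab.2 ab.2

/-- The wired distribution `P_f'(a,b) = P₀'(a,b|x=b)`. -/
noncomputable def PzeroF' (ε : ℝ) : Fin 2 × Fin 2 → ℝ :=
  fun ab => Pzero' ε ab.1 ab.2 ab.2

/-- the prior-to-input-communication wiring doubles the behavior
relative entropy, hence strictly increases it when `ε ≠ 1/4`. -/
theorem wpicc_doubles_relEnt (ε : ℝ) (hε0 : 0 < ε) (hε1 : ε < 1 / 2) :
    relEnt (PzeroF ε) (PzeroF' ε) =
      2 * (Finset.univ.sup fun x : Fin 2 =>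
        relEnt (fun ab : Fin 2 × Fin 2 => Pzero ε ab.1 ab.2 x)
               (fun ab : Fin 2 × Fin 2 => Pzero' ε ab.1 ab.2 x)) ∧
    (ε ≠ 1 / 4 →
      (Finset.univ.sup fun x : Fin 2 =>
        relEnt (fun ab : Fin 2 × Fin 2 => Pzero ε ab.1 ab.2 x)
               (fun ab : Fin 2 × Fin 2 => Pzero' ε ab.1 ab.2 x))
        < relEnt (PzeroF ε) (PzeroF' ε)) := by
  have hc : (0:ℝ) < 1/2 - ε := by linarith
  set K := (1/2 - 2*ε) * (Real.log (1/2 - ε) - Real.log ε) with hK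
  have hq' : ∀ a b : Fin 2, ∀ x : Fin 2, Pzero' ε a b x ≠ 0 := by
    intro a b x
    simp only [Pzero']
    split <;> intro h <;> linarith
  have hmain : relEnt (PzeroF ε) (PzeroF' ε) = ENNReal.ofReal (2*K) := by
    rw [relEnt, if_neg]
    · congr 1
      rw [Fintype.sum_prod_type]
      simp only [Fin.sum_univ_two]
      show (1/2-ε)*Real.log ((1/2-ε)/ε) + ε*Real.log (ε/(1/2-ε))
        + (ε*Real.log (ε/(1/2-ε)) + (1/2-ε)*Real.log ((1/2-ε)/ε)) = 2*K
      rw [Real.log_div hc.ne' hε0.ne', Real.log_div hε0.ne' hc.ne', hK]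
      ring
    · rintro ⟨⟨a,b⟩, -, hz⟩
      exact hq' a b b hz
  have hx : ∀ x : Fin 2,
      relEnt (fun ab : Fin 2 × Fin 2 => Pzero ε ab.1 ab.2 x)
             (fun ab : Fin 2 × Fin 2 => Pzero' ε ab.1 ab.2 x) = ENNReal.ofReal K := by
    intro x
    rw [relEnt, if_neg]
    · congr 1
      rw [Fintype.sum_prod_type]
      simp only [Fin.sum_univ_two]
      fin_cases x
      · show (1/2-ε)*Real.log ((1/2-ε)/ε) + ε*Real.log (ε/ε)
          + (ε*Real.log (ε/(1/2-ε)) + (1/2-ε)*Real.log ((1/2-ε)/(1/2-ε))) = K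
        rw [div_self hε0.ne', div_self hc.ne', Real.log_one,
          Real.log_div hc.ne' hε0.ne', Real.log_div hε0.ne' hc.ne', hK]
        ring
      · show (1/2-ε)*Real.log ((1/2-ε)/(1/2-ε)) + ε*Real.log (ε/(1/2-ε))
          + (ε*Real.log (ε/ε) + (1/2-ε)*Real.log ((1/2-ε)/ε)) = K
        rw [div_self hε0.ne', div_self hc.ne', Real.log_one,
          Real.log_div hc.ne' hε0.ne', Real.log_div hε0.ne' hc.ne', hK]
        ring
    · rintro ⟨⟨a,b⟩, -, hz⟩
      exact hq' a b x hz
  have hsup : (Finset.univ.sup fun x : Fin 2 =>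
      relEnt (fun ab : Fin 2 × Fin 2 => Pzero ε ab.1 ab.2 x)
             (fun ab : Fin 2 × Fin 2 => Pzero' ε ab.1 ab.2 x)) = ENNReal.ofReal K := by
    rw [Finset.sup_congr rfl (fun x _ => hx x), Finset.sup_const Finset.univ_nonempty]
  have hKpos : ε ≠ 1/4 → 0 < K := by
    intro hne
    rcases lt_or_gt_of_ne hne with h | h
    · exact mul_pos (by linarith) (by
        have := Real.log_lt_log hε0 (show ε < 1/2 - ε by linarith); linarith)
    · exact mul_pos_of_neg_of_neg (by linarith) (by
        have := Real.log_lt_log hc (show 1/2 - ε < ε by linarith); linarith)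
  constructor
  · rw [hmain, hsup, ENNReal.ofReal_mul (by norm_num : (0:ℝ) ≤ 2)]
    norm_num
  · intro hne
    rw [hmain, hsup]
    exact ENNReal.ofReal_lt_ofReal_iff (by linarith [hKpos hne]) |>.mpr
      (by linarith [hKpos hne])
end

section
/- The nonlocality-free map T(P)(α,β|χ) := P(α,β|x=β) on no-signaling behaviors is not realizable by any global wiring: for every conditional probability distribution I(x|χ) on {0,1} (one for each χ ∈ {0,1}) and every conditional probability distribution O(α,β|a,b,x,χ) on {0,1}², there exist a no-signaling behavior P (outputs a,b ∈ {0,1}, Alice input x ∈ {0,1}, trivial Bob input) and values α,β,χ ∈ {0,1} such that ∑_{a,b,x} O(α,β|a,b,x,χ)·P(a,b|x)·I(x|χ) ≠ P(α,β|x=β). -/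
open scoped ENNReal
open Finset

/-- the nonlocality-free map `T(P)(α,β|χ) := P(α,β|x=β)` is not
realizable by any global wiring in the scenario with binary outputs, binary
Alice input and trivial Bob input. -/
theorem wpicc_map_not_global_wiring
    (I : Fin 2 → Fin 2 → ℝ)  -- I x χ = I(x|χ)
    (hI : ∀ χ, (∀ x, 0 ≤ I x χ) ∧ ∑ x, I x χ = 1)
    (O : Fin 2 → Fin 2 → Fin 2 → Fin 2 → Fin 2 → Fin 2 → ℝ)
      -- O α β a b x χ = O(α,β|a,b,x,χ)
    (hO : ∀ a b x χ, (∀ α β, 0 ≤ O α β a b x χ) ∧ ∑ α, ∑ β, O α β a b x χ = 1) :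
    ∃ P : Fin 2 → Fin 2 → Fin 2 → ℝ,   -- P a b x = P(a,b|x)
      (∀ a b x, 0 ≤ P a b x) ∧ (∀ x, ∑ a, ∑ b, P a b x = 1) ∧
      (∀ b x x', ∑ a, P a b x = ∑ a, P a b x') ∧
      ∃ α β χ : Fin 2,
        (∑ a, ∑ b, ∑ x, O α β a b x χ * P a b x * I x χ) ≠ P α β β := by
  by_contra hcon
  push_neg at hcon
  -- basic facts about I and O
  have hI0 : 0 ≤ I 0 0 := (hI 0).1 0
  have hI1 : 0 ≤ I 1 0 := (hI 0).1 1
  have hIsum : I 0 0 + I 1 0 = 1 := by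
    have := (hI 0).2; simpa [Fin.sum_univ_two] using this
  have hOle : ∀ α β a b x χ, O α β a b x χ ≤ 1 := by
    intro α β a b x χ
    have hs := (hO a b x χ).2
    have hn := (hO a b x χ).1
    simp only [Fin.sum_univ_two] at hs
    fin_cases α <;> fin_cases β <;> simp only [Fin.mk_zero, Fin.mk_one] <;>
      nlinarith [hn 0 0, hn 0 1, hn 1 0, hn 1 1]
  -- Constant behavior a=1, b=0
  have h1 := hcon (fun a b _ => if a = 1 ∧ b = 0 then 1 else 0)
    (by intro a b x; split <;> norm_num)
    (by intro x; simp only [Fin.sum_univ_two]; norm_num)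
    (by intro b x x'; simp only [Fin.sum_univ_two])
    0 0 0
  -- Constant behavior a=0, b=1
  have h2 := hcon (fun a b _ => if a = 0 ∧ b = 1 then 1 else 0)
    (by intro a b x; split <;> norm_num)
    (by intro x; simp only [Fin.sum_univ_two]; norm_num)
    (by intro b x x'; simp only [Fin.sum_univ_two])
    1 1 0
  -- Behavior a=x, b=0
  have h3 := hcon (fun a b x => if a = x ∧ b = 0 then 1 else 0)
    (by intro a b x; split <;> norm_num)
    (by intro x; fin_cases x <;> simp only [Fin.sum_univ_two] <;> norm_num)
    (by intro b x x'; fin_cases b <;> fin_cases x <;> fin_cases x' <;>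
        simp only [Fin.sum_univ_two] <;> norm_num)
    0 0 0
  -- Behavior a=x, b=1
  have h4 := hcon (fun a b x => if a = x ∧ b = 1 then 1 else 0)
    (by intro a b x; split <;> norm_num)
    (by intro x; fin_cases x <;> simp only [Fin.sum_univ_two] <;> norm_num)
    (by intro b x x'; fin_cases b <;> fin_cases x <;> fin_cases x' <;>
        simp only [Fin.sum_univ_two] <;> norm_num)
    1 1 0
  simp only [Fin.sum_univ_two] at h1 h2 h3 h4
  norm_num at h1 h2 h3 h4
  -- h1 : O 0 0 1 0 0 0 * I 0 0 + O 0 0 1 0 1 0 * I 1 0 = 0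
  -- h3 : O 0 0 0 0 0 0 * I 0 0 + O 0 0 1 0 1 0 * I 1 0 = 1
  have hon : ∀ a b x, 0 ≤ O 0 0 a b x 0 := fun a b x => (hO a b x 0).1 0 0
  have hon' : ∀ a b x, 0 ≤ O 1 1 a b x 0 := fun a b x => (hO a b x 0).1 1 1
  nlinarith [mul_nonneg (hon 1 0 0) hI0, mul_nonneg (hon 1 0 1) hI1,
    mul_nonneg (hon' 0 1 0) hI0, mul_nonneg (hon' 0 1 1) hI1,
    mul_nonneg hI0 (sub_nonneg.2 (hOle 0 0 0 0 0 0)),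
    mul_nonneg hI1 (sub_nonneg.2 (hOle 1 1 1 1 1 0))]
end

section
/- Mixing with a local behavior is realizable by an LOSR wiring: for any behavior P in the (r,s) Bell scenario, any local behavior Q in the (r_f,s_f) scenario, any μ ∈ [0,1], and any LOSR wiring W₀ from the (r,s) scenario to the (r_f,s_f) scenario, there exists an LOSR wiring W' from the (r,s) scenario to the (r_f,s_f) scenario such that W'(P)(α,β|χ,ψ) = μ·Q(α,β|χ,ψ) + (1−μ)·W₀(P)(α,β|χ,ψ) for all α,β,χ,ψ. -/
open scoped ENNReal
open Finset

private lemma sum_swap4' {r s : ℕ} (f : Fin r → Fin r → Fin s → Fin s → ℝ) :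
    ∑ a, ∑ b, ∑ x, ∑ y, f a b x y = ∑ x, ∑ y, ∑ a, ∑ b, f a b x y := by
  calc ∑ a, ∑ b, ∑ x, ∑ y, f a b x y
      = ∑ a, ∑ x, ∑ b, ∑ y, f a b x y :=
        Finset.sum_congr rfl (fun a _ => Finset.sum_comm)
    _ = ∑ x, ∑ a, ∑ b, ∑ y, f a b x y := Finset.sum_comm
    _ = ∑ x, ∑ a, ∑ y, ∑ b, f a b x y :=
        Finset.sum_congr rfl (fun x _ =>
          Finset.sum_congr rfl (fun a _ => Finset.sum_comm))
    _ = ∑ x, ∑ y, ∑ a, ∑ b, f a b x y :=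
        Finset.sum_congr rfl (fun x _ => Finset.sum_comm)

/-- mixing with a local behavior is realizable by an LOSR
wiring. -/
theorem mixing_with_local_is_LOSR {r s rf sf : ℕ} (hr : 0 < r) (hs : 0 < s)
    (P : Fin r → Fin r → Fin s → Fin s → ℝ) (hP : IsBehavior P)
    (Q : Fin rf → Fin rf → Fin sf → Fin sf → ℝ)
    (hQ : IsBehavior Q) (hQloc : IsLocal Q)
    (μ : ℝ) (hμ0 : 0 ≤ μ) (hμ1 : μ ≤ 1)
    (W₀ : GlobalWiring r s rf sf) (hW₀ : W₀.IsLOSR) :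
    ∃ W' : GlobalWiring r s rf sf, W'.IsLOSR ∧
      ∀ α β χ ψ, W'.apply P α β χ ψ =
        μ * Q α β χ ψ + (1 - μ) * W₀.apply P α β χ ψ := by
  obtain ⟨nQ, qQ, QA, QB, hqQ, hQA, hQB, hQeq⟩ := hQloc
  obtain ⟨n, m, q, q', IA, IB, OA, OB, hq, hq', hIA, hIB, hOA, hOB, hIeq, hOeq⟩ := hW₀
  have hμ1' : (0:ℝ) ≤ 1 - μ := by linarith
  refine ⟨{ I := W₀.I
            O := fun α β a b x y χ ψ =>
              μ * Q α β χ ψ + (1 - μ) * W₀.O α β a b x y χ ψ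
            I_nonneg := W₀.I_nonneg
            I_sum := W₀.I_sum
            O_nonneg := fun α β a b x y χ ψ =>
              add_nonneg (mul_nonneg hμ0 (hQ.1 α β χ ψ))
                (mul_nonneg hμ1' (W₀.O_nonneg α β a b x y χ ψ))
            O_sum := ?_ }, ?_, ?_⟩
  · intro a b x y χ ψ
    simp only [Finset.sum_add_distrib, ← Finset.mul_sum]
    rw [hQ.2, W₀.O_sum]
    ring
  · -- LOSR structure
    refine ⟨n, nQ + m, q,
      (fun i => Fin.addCases (fun l => μ * qQ l) (fun u => (1 - μ) * q' u) i),
      IA, IB,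
      (fun α a x χ i => Fin.addCases (fun l => QA α χ l)
        (fun u => OA α a x χ u) i),
      (fun β b y ψ i => Fin.addCases (fun l => QB β ψ l)
        (fun u => OB β b y ψ u) i),
      hq, ?_, hIA, hIB, ?_, ?_, hIeq, ?_⟩
    · constructor
      · intro i
        induction i using Fin.addCases with
        | left l => simpa using mul_nonneg hμ0 (hqQ.1 l)
        | right u => simpa using mul_nonneg hμ1' (hq'.1 u)
      · rw [Fin.sum_univ_add]
        simp only [Fin.addCases_left, Fin.addCases_right, ← Finset.mul_sum]
        rw [hqQ.2, hq'.2]; ring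
    · intro a x χ i
      induction i using Fin.addCases with
      | left l =>
        simp only [Fin.addCases_left]
        exact ⟨fun α => (hQA χ l).1 α, (hQA χ l).2⟩
      | right u =>
        simp only [Fin.addCases_right]
        exact ⟨fun α => (hOA a x χ u).1 α, (hOA a x χ u).2⟩
    · intro b y ψ i
      induction i using Fin.addCases with
      | left l =>
        simp only [Fin.addCases_left]
        exact ⟨fun β => (hQB ψ l).1 β, (hQB ψ l).2⟩
      | right u =>
        simp only [Fin.addCases_right]
        exact ⟨fun β => (hOB b y ψ u).1 β, (hOB b y ψ u).2⟩
    · intro α β a b x y χ ψ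
      rw [Fin.sum_univ_add]
      simp only [Fin.addCases_left, Fin.addCases_right]
      rw [hQeq, hOeq, Finset.mul_sum, Finset.mul_sum]
      congr 1 <;> exact Finset.sum_congr rfl fun _ _ => by ring
  · -- apply formula
    intro α β χ ψ
    have hS : ∑ a, ∑ b, ∑ x, ∑ y, P a b x y * W₀.I x y χ ψ = 1 := by
      calc ∑ a, ∑ b, ∑ x, ∑ y, P a b x y * W₀.I x y χ ψ
          = ∑ x, ∑ y, ∑ a, ∑ b, P a b x y * W₀.I x y χ ψ := sum_swap4' _
        _ = ∑ x, ∑ y, (∑ a, ∑ b, P a b x y) * W₀.I x y χ ψ := by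
            simp [Finset.sum_mul]
        _ = ∑ x, ∑ y, W₀.I x y χ ψ := by
            refine Finset.sum_congr rfl fun x _ => Finset.sum_congr rfl fun y _ => ?_
            rw [hP.2 x y, one_mul]
        _ = 1 := W₀.I_sum χ ψ
    simp only [GlobalWiring.apply]
    have expand : ∀ (a b : Fin r) (x y : Fin s),
        (μ * Q α β χ ψ + (1 - μ) * W₀.O α β a b x y χ ψ) * P a b x y *
            W₀.I x y χ ψ =
          μ * Q α β χ ψ * (P a b x y * W₀.I x y χ ψ) +
            (1 - μ) * (W₀.O α β a b x y χ ψ * P a b x y * W₀.I x y χ ψ) :=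
      fun a b x y => by ring
    simp only [expand, Finset.sum_add_distrib, ← Finset.mul_sum]
    rw [hS]
    ring
end

section
/- Every LOSR monotone is monotone under the parametrized form of WPICC wirings: let f be a nonnegative function on behaviors of the (r,s) Bell scenario such that f(W(P)) ≤ f(P) for every LOSR wiring W from the (r,s) scenario to itself and every no-signaling behavior P. Then for every no-signaling behavior P, every μ ∈ [0,1], every local behavior Q in the (r,s) scenario, and every LOSR wiring W₀ from the (r,s) scenario to itself, f(μ·Q + (1−μ)·W₀(P)) ≤ f(P), where μ·Q + (1−μ)·W₀(P) denotes the entrywise convex combination. -/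
open scoped ENNReal
open Finset

private lemma sum_swap4 {α β γ δ : Type*} [Fintype α] [Fintype β] [Fintype γ] [Fintype δ]
    (g : α → β → γ → δ → ℝ) :
    ∑ a, ∑ b, ∑ x, ∑ y, g a b x y = ∑ x, ∑ y, ∑ a, ∑ b, g a b x y := by
  calc ∑ a, ∑ b, ∑ x, ∑ y, g a b x y
      = ∑ a, ∑ x, ∑ b, ∑ y, g a b x y :=
        Finset.sum_congr rfl fun a _ => Finset.sum_comm
    _ = ∑ x, ∑ a, ∑ b, ∑ y, g a b x y := Finset.sum_comm
    _ = ∑ x, ∑ a, ∑ y, ∑ b, g a b x y :=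
        Finset.sum_congr rfl fun x _ => Finset.sum_congr rfl fun a _ => Finset.sum_comm
    _ = ∑ x, ∑ y, ∑ a, ∑ b, g a b x y :=
        Finset.sum_congr rfl fun x _ => Finset.sum_comm

/-- The mixture wiring: keep `W₀`'s input box, and mix the output box of `W₀`
with a box that outputs `Q(·,·|χ,ψ)` regardless of `a,b,x,y`. -/
noncomputable def mixW {r s : ℕ} (μ : ℝ) (hμ0 : 0 ≤ μ) (hμ1 : μ ≤ 1)
    (Q : Fin r → Fin r → Fin s → Fin s → ℝ) (hQ : IsBehavior Q)
    (W₀ : GlobalWiring r s r s) : GlobalWiring r s r s where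
  I := W₀.I
  O := fun α β a b x y χ ψ => μ * Q α β χ ψ + (1 - μ) * W₀.O α β a b x y χ ψ
  I_nonneg := W₀.I_nonneg
  I_sum := W₀.I_sum
  O_nonneg := fun α β a b x y χ ψ =>
    add_nonneg (mul_nonneg hμ0 (hQ.1 _ _ _ _))
      (mul_nonneg (by linarith) (W₀.O_nonneg _ _ _ _ _ _ _ _))
  O_sum := by
    intro a b x y χ ψ
    simp only [Finset.sum_add_distrib, ← Finset.mul_sum]
    rw [hQ.2 χ ψ, W₀.O_sum a b x y χ ψ]
    ring

private lemma mixW_isLOSR {r s : ℕ} (μ : ℝ) (hμ0 : 0 ≤ μ) (hμ1 : μ ≤ 1)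
    (Q : Fin r → Fin r → Fin s → Fin s → ℝ) (hQ : IsBehavior Q) (hQloc : IsLocal Q)
    (W₀ : GlobalWiring r s r s) (hW₀ : W₀.IsLOSR) :
    (mixW μ hμ0 hμ1 Q hQ W₀).IsLOSR := by
  obtain ⟨nQ, qQ, QA, QB, hqQ, hQA, hQB, hQeq⟩ := hQloc
  obtain ⟨n, m, q, q', IA, IB, OA, OB, hq, hq', hIA, hIB, hOA, hOB, hIeq, hOeq⟩ := hW₀
  have h1μ : 0 ≤ 1 - μ := by linarith
  refine ⟨n, nQ + m, q,
    Fin.addCases (fun l => μ * qQ l) (fun u => (1 - μ) * q' u),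
    IA, IB,
    fun α a x χ => Fin.addCases (fun l => QA α χ l) (fun u => OA α a x χ u),
    fun β b y ψ => Fin.addCases (fun l => QB β ψ l) (fun u => OB β b y ψ u),
    hq, ?_, hIA, hIB, ?_, ?_, hIeq, ?_⟩
  · constructor
    · intro u
      induction u using Fin.addCases with
      | left l => simp only [Fin.addCases_left]; exact mul_nonneg hμ0 (hqQ.1 l)
      | right u => simp only [Fin.addCases_right]; exact mul_nonneg h1μ (hq'.1 u)
    · rw [Fin.sum_univ_add]
      simp only [Fin.addCases_left, Fin.addCases_right, ← Finset.mul_sum]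
      rw [hqQ.2, hq'.2]; ring
  · intro a x χ u
    induction u using Fin.addCases with
    | left l =>
      simp only [Fin.addCases_left]
      exact ⟨(hQA χ l).1, (hQA χ l).2⟩
    | right u =>
      simp only [Fin.addCases_right]
      exact ⟨(hOA a x χ u).1, (hOA a x χ u).2⟩
  · intro b y ψ u
    induction u using Fin.addCases with
    | left l =>
      simp only [Fin.addCases_left]
      exact ⟨(hQB ψ l).1, (hQB ψ l).2⟩
    | right u =>
      simp only [Fin.addCases_right]
      exact ⟨(hOB b y ψ u).1, (hOB b y ψ u).2⟩
  · intro α β a b x y χ ψ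
    rw [Fin.sum_univ_add]
    simp only [Fin.addCases_left, Fin.addCases_right]
    have e1 : ∑ l, μ * qQ l * QA α χ l * QB β ψ l = μ * Q α β χ ψ := by
      rw [hQeq, Finset.mul_sum]
      exact Finset.sum_congr rfl fun _ _ => by ring
    have e2 : ∑ u, (1 - μ) * q' u * OA α a x χ u * OB β b y ψ u
        = (1 - μ) * W₀.O α β a b x y χ ψ := by
      rw [hOeq, Finset.mul_sum]
      exact Finset.sum_congr rfl fun _ _ => by ring
    show μ * Q α β χ ψ + (1 - μ) * W₀.O α β a b x y χ ψ = _
    rw [e1, e2]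

private lemma mixW_apply {r s : ℕ} (μ : ℝ) (hμ0 : 0 ≤ μ) (hμ1 : μ ≤ 1)
    (Q : Fin r → Fin r → Fin s → Fin s → ℝ) (hQ : IsBehavior Q)
    (W₀ : GlobalWiring r s r s)
    (P : Fin r → Fin r → Fin s → Fin s → ℝ) (hP : IsBehavior P) :
    (mixW μ hμ0 hμ1 Q hQ W₀).apply P
      = fun a b x y => μ * Q a b x y + (1 - μ) * W₀.apply P a b x y := by
  funext α β χ ψ
  show ∑ a, ∑ b, ∑ x, ∑ y,
      (μ * Q α β χ ψ + (1 - μ) * W₀.O α β a b x y χ ψ) * P a b x y * W₀.I x y χ ψ = _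
  have key : ∑ a, ∑ b, ∑ x, ∑ y, P a b x y * W₀.I x y χ ψ = 1 := by
    rw [sum_swap4]
    have : ∀ x y, ∑ a, ∑ b, P a b x y * W₀.I x y χ ψ = W₀.I x y χ ψ := by
      intro x y
      simp only [← Finset.sum_mul]
      rw [hP.2 x y, one_mul]
    simp only [this]
    exact W₀.I_sum χ ψ
  have expand : ∀ a b x y,
      (μ * Q α β χ ψ + (1 - μ) * W₀.O α β a b x y χ ψ) * P a b x y * W₀.I x y χ ψ
      = μ * Q α β χ ψ * (P a b x y * W₀.I x y χ ψ)
        + (1 - μ) * (W₀.O α β a b x y χ ψ * P a b x y * W₀.I x y χ ψ) := by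
    intros; ring
  simp only [expand, Finset.sum_add_distrib, ← Finset.mul_sum]
  rw [key, mul_one]
  rfl

/-- every LOSR monotone is monotone under the parametrized form
`μ·Q + (1−μ)·W₀(P)` of WPICC wirings. -/
theorem LOSR_monotone_is_WPICC_monotone {r s : ℕ} (hr : 0 < r) (hs : 0 < s)
    (f : (Fin r → Fin r → Fin s → Fin s → ℝ) → ℝ)
    (hf0 : ∀ P, 0 ≤ f P)
    (hfmono : ∀ W : GlobalWiring r s r s, W.IsLOSR →
      ∀ P, IsBehavior P → NoSignaling P → f (W.apply P) ≤ f P)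
    (P : Fin r → Fin r → Fin s → Fin s → ℝ)
    (hP : IsBehavior P) (hPns : NoSignaling P)
    (μ : ℝ) (hμ0 : 0 ≤ μ) (hμ1 : μ ≤ 1)
    (Q : Fin r → Fin r → Fin s → Fin s → ℝ)
    (hQ : IsBehavior Q) (hQloc : IsLocal Q)
    (W₀ : GlobalWiring r s r s) (hW₀ : W₀.IsLOSR) :
    f (fun a b x y => μ * Q a b x y + (1 - μ) * W₀.apply P a b x y) ≤ f P := by
  rw [← mixW_apply μ hμ0 hμ1 Q hQ W₀ P hP]
  exact hfmono _ (mixW_isLOSR μ hμ0 hμ1 Q hQ hQloc W₀ hW₀) P hP hPns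
end

section
/- Convexity of the relative entropy of nonlocality: for any two behaviors P, P' in the same (r,s) Bell scenario and any μ ∈ [0,1], S_nl(μ·P + (1−μ)·P') ≤ μ·S_nl(P) + (1−μ)·S_nl(P'), where μ·P + (1−μ)·P' denotes the entrywise convex combination (itself a behavior). -/
open scoped ENNReal
open Finset

section Aux

/-- Two-term log-sum inequality. -/
lemma logsum_two (a b c d : ℝ) (ha : 0 ≤ a) (hb : 0 ≤ b) (hc : 0 ≤ c) (hd : 0 ≤ d)
    (hac : a ≠ 0 → c ≠ 0) (hbd : b ≠ 0 → d ≠ 0) :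
    (a + b) * Real.log ((a + b) / (c + d)) ≤
      a * Real.log (a / c) + b * Real.log (b / d) := by
  rcases eq_or_lt_of_le ha with rfl | hA
  · rcases eq_or_lt_of_le hb with rfl | hB
    · simp
    · have hdd : d ≠ 0 := hbd hB.ne'
      have hd' : 0 < d := lt_of_le_of_ne hd (Ne.symm hdd)
      have h1 : b / (c + d) ≤ b / d := by
        apply div_le_div_of_nonneg_left hB.le hd'
        linarith
      have h2 : Real.log (b / (c + d)) ≤ Real.log (b / d) :=
        Real.log_le_log (by positivity) h1
      have h3 := mul_le_mul_of_nonneg_left h2 hB.le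
      simpa using h3
  · rcases eq_or_lt_of_le hb with rfl | hB
    · have hcc : c ≠ 0 := hac hA.ne'
      have hc' : 0 < c := lt_of_le_of_ne hc (Ne.symm hcc)
      have h1 : a / (c + d) ≤ a / c := by
        apply div_le_div_of_nonneg_left hA.le hc'
        linarith
      have h2 : Real.log (a / (c + d)) ≤ Real.log (a / c) :=
        Real.log_le_log (by positivity) h1
      have h3 := mul_le_mul_of_nonneg_left h2 hA.le
      simpa using h3
    · have hc' : 0 < c := lt_of_le_of_ne hc (Ne.symm (hac hA.ne'))
      have hd' : 0 < d := lt_of_le_of_ne hd (Ne.symm (hbd hB.ne'))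
      have hab : (0:ℝ) < a + b := by linarith
      have hcd : (0:ℝ) < c + d := by linarith
      have kA : Real.log ((a + b) / (c + d)) ≤
          Real.log (a / c) + ((a + b) * c / ((c + d) * a) - 1) := by
        have hu : (0:ℝ) < (a + b) / (c + d) * (c / a) := by positivity
        have h := Real.log_le_sub_one_of_pos hu
        rw [Real.log_mul (by positivity : ((a+b)/(c+d) : ℝ) ≠ 0)
            (by positivity : (c/a : ℝ) ≠ 0)] at h
        have hli : Real.log (c / a) = - Real.log (a / c) := by
          rw [← Real.log_inv, inv_div]
        rw [hli, div_mul_div_comm] at h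
        linarith
      have kB : Real.log ((a + b) / (c + d)) ≤
          Real.log (b / d) + ((a + b) * d / ((c + d) * b) - 1) := by
        have hu : (0:ℝ) < (a + b) / (c + d) * (d / b) := by positivity
        have h := Real.log_le_sub_one_of_pos hu
        rw [Real.log_mul (by positivity : ((a+b)/(c+d) : ℝ) ≠ 0)
            (by positivity : (d/b : ℝ) ≠ 0)] at h
        have hli : Real.log (d / b) = - Real.log (b / d) := by
          rw [← Real.log_inv, inv_div]
        rw [hli, div_mul_div_comm] at h
        linarith
      have e1 : a * ((a + b) * c / ((c + d) * a) - 1) +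
          b * ((a + b) * d / ((c + d) * b) - 1) = 0 := by
        field_simp
        ring
      calc (a + b) * Real.log ((a + b) / (c + d))
          = a * Real.log ((a + b) / (c + d)) + b * Real.log ((a + b) / (c + d)) := by
            ring
        _ ≤ a * (Real.log (a / c) + ((a + b) * c / ((c + d) * a) - 1)) +
            b * (Real.log (b / d) + ((a + b) * d / ((c + d) * b) - 1)) :=
              add_le_add (mul_le_mul_of_nonneg_left kA hA.le)
                (mul_le_mul_of_nonneg_left kB hB.le)
        _ = a * Real.log (a / c) + b * Real.log (b / d) +
            (a * ((a + b) * c / ((c + d) * a) - 1) +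
             b * ((a + b) * d / ((c + d) * b) - 1)) := by ring
        _ = a * Real.log (a / c) + b * Real.log (b / d) := by rw [e1, add_zero]

/-- Pointwise convexity of the relative-entropy integrand. -/
lemma relEnt_pt (μ pz p'z qz q'z : ℝ) (hμ : 0 < μ) (hμ' : μ < 1)
    (hp : 0 ≤ pz) (hp' : 0 ≤ p'z) (hq : 0 ≤ qz) (hq' : 0 ≤ q'z)
    (h1 : pz ≠ 0 → qz ≠ 0) (h2 : p'z ≠ 0 → q'z ≠ 0) :
    (μ * pz + (1 - μ) * p'z) *
        Real.log ((μ * pz + (1 - μ) * p'z) / (μ * qz + (1 - μ) * q'z)) ≤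
      μ * (pz * Real.log (pz / qz)) + (1 - μ) * (p'z * Real.log (p'z / q'z)) := by
  have h1μ : (0:ℝ) < 1 - μ := by linarith
  have key := logsum_two (μ * pz) ((1 - μ) * p'z) (μ * qz) ((1 - μ) * q'z)
    (by positivity) (by positivity) (by positivity) (by positivity)
    (fun h => mul_ne_zero hμ.ne' (h1 (right_ne_zero_of_mul h)))
    (fun h => mul_ne_zero h1μ.ne' (h2 (right_ne_zero_of_mul h)))
  have e1 : (μ * pz) * Real.log ((μ * pz) / (μ * qz)) =
      μ * (pz * Real.log (pz / qz)) := by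
    rw [mul_div_mul_left _ _ hμ.ne', mul_assoc]
  have e2 : ((1 - μ) * p'z) * Real.log (((1 - μ) * p'z) / ((1 - μ) * q'z)) =
      (1 - μ) * (p'z * Real.log (p'z / q'z)) := by
    rw [mul_div_mul_left _ _ h1μ.ne', mul_assoc]
  rw [e1, e2] at key
  exact key

/-- Joint convexity of the relative entropy. -/
lemma relEnt_convex {Z : Type*} [Fintype Z] (p p' q q' : Z → ℝ)
    (hp : ∀ z, 0 ≤ p z) (hp' : ∀ z, 0 ≤ p' z)
    (hq : ∀ z, 0 ≤ q z) (hq' : ∀ z, 0 ≤ q' z)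
    (μ : ℝ) (hμ : 0 < μ) (hμ' : μ < 1) :
    relEnt (fun z => μ * p z + (1 - μ) * p' z) (fun z => μ * q z + (1 - μ) * q' z) ≤
      ENNReal.ofReal μ * relEnt p q + ENNReal.ofReal (1 - μ) * relEnt p' q' := by
  have h1μ : (0:ℝ) < 1 - μ := by linarith
  have hc₁0 : ENNReal.ofReal μ ≠ 0 := ne_of_gt (ENNReal.ofReal_pos.2 hμ)
  have hc₂0 : ENNReal.ofReal (1 - μ) ≠ 0 := ne_of_gt (ENNReal.ofReal_pos.2 h1μ)
  by_cases H1 : ∃ z, p z ≠ 0 ∧ q z = 0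
  · rw [show relEnt p q = ⊤ from if_pos H1, ENNReal.mul_top hc₁0]
    exact le_top.trans_eq (top_add _).symm
  by_cases H2 : ∃ z, p' z ≠ 0 ∧ q' z = 0
  · rw [show relEnt p' q' = ⊤ from if_pos H2, ENNReal.mul_top hc₂0]
    exact le_top.trans_eq (add_top _).symm
  push_neg at H1 H2
  have K1 : ∀ z, p z ≠ 0 → q z ≠ 0 := H1
  have K2 : ∀ z, p' z ≠ 0 → q' z ≠ 0 := H2
  have K : ¬∃ z, (μ * p z + (1 - μ) * p' z) ≠ 0 ∧ (μ * q z + (1 - μ) * q' z) = 0 := by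
    rintro ⟨z, hz1, hz2⟩
    have hqz : μ * q z = 0 ∧ (1 - μ) * q' z = 0 :=
      (add_eq_zero_iff_of_nonneg (mul_nonneg hμ.le (hq z))
        (mul_nonneg h1μ.le (hq' z))).1 hz2
    have hq0 : q z = 0 := by
      rcases mul_eq_zero.1 hqz.1 with h | h
      · exact absurd h hμ.ne'
      · exact h
    have hq'0 : q' z = 0 := by
      rcases mul_eq_zero.1 hqz.2 with h | h
      · exact absurd h h1μ.ne'
      · exact h
    have hp0 : p z = 0 := by
      by_contra h; exact K1 z h hq0
    have hp'0 : p' z = 0 := by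
      by_contra h; exact K2 z h hq'0
    exact hz1 (by rw [hp0, hp'0]; ring)
  rw [relEnt, relEnt, relEnt, if_neg K, if_neg (not_exists.2 fun z h => (K1 z h.1) h.2),
    if_neg (not_exists.2 fun z h => (K2 z h.1) h.2)]
  rw [← ENNReal.ofReal_mul hμ.le, ← ENNReal.ofReal_mul h1μ.le]
  refine le_trans ?_ ENNReal.ofReal_add_le
  apply ENNReal.ofReal_le_ofReal
  rw [Finset.mul_sum, Finset.mul_sum, ← Finset.sum_add_distrib]
  apply Finset.sum_le_sum
  intro z _
  exact relEnt_pt μ (p z) (p' z) (q z) (q' z) hμ hμ' (hp z) (hp' z) (hq z) (hq' z)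
    (K1 z) (K2 z)

/-- Convexity of the behavior relative entropy. -/
lemma Sb_convex {r s : ℕ} (P P' Q Q' : Fin r → Fin r → Fin s → Fin s → ℝ)
    (hP : ∀ a b x y, 0 ≤ P a b x y) (hP' : ∀ a b x y, 0 ≤ P' a b x y)
    (hQ : ∀ a b x y, 0 ≤ Q a b x y) (hQ' : ∀ a b x y, 0 ≤ Q' a b x y)
    (μ : ℝ) (hμ : 0 < μ) (hμ' : μ < 1) :
    Sb (fun a b x y => μ * P a b x y + (1 - μ) * P' a b x y)
       (fun a b x y => μ * Q a b x y + (1 - μ) * Q' a b x y) ≤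
      ENNReal.ofReal μ * Sb P Q + ENNReal.ofReal (1 - μ) * Sb P' Q' := by
  unfold Sb outDist
  apply Finset.sup_le
  intro xy _
  have h := relEnt_convex (fun ab : Fin r × Fin r => P ab.1 ab.2 xy.1 xy.2)
    (fun ab => P' ab.1 ab.2 xy.1 xy.2)
    (fun ab => Q ab.1 ab.2 xy.1 xy.2) (fun ab => Q' ab.1 ab.2 xy.1 xy.2)
    (fun z => hP _ _ _ _) (fun z => hP' _ _ _ _)
    (fun z => hQ _ _ _ _) (fun z => hQ' _ _ _ _) μ hμ hμ'
  refine le_trans h (add_le_add ?_ ?_)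
  · refine mul_le_mul_right ?_ _
    exact Finset.le_sup (f := fun xy : Fin s × Fin s =>
      relEnt (fun ab : Fin r × Fin r => P ab.1 ab.2 xy.1 xy.2)
        (fun ab : Fin r × Fin r => Q ab.1 ab.2 xy.1 xy.2)) (Finset.mem_univ xy)
  · refine mul_le_mul_right ?_ _
    exact Finset.le_sup (f := fun xy : Fin s × Fin s =>
      relEnt (fun ab : Fin r × Fin r => P' ab.1 ab.2 xy.1 xy.2)
        (fun ab : Fin r × Fin r => Q' ab.1 ab.2 xy.1 xy.2)) (Finset.mem_univ xy)

/-- A convex mixture of behaviors is a behavior. -/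
lemma IsBehavior.mymix {r s : ℕ} {P P' : Fin r → Fin r → Fin s → Fin s → ℝ}
    (hP : IsBehavior P) (hP' : IsBehavior P')
    (μ : ℝ) (hμ0 : 0 ≤ μ) (hμ1 : μ ≤ 1) :
    IsBehavior (fun a b x y => μ * P a b x y + (1 - μ) * P' a b x y) := by
  constructor
  · intro a b x y
    have h1 := hP.1 a b x y
    have h2 := hP'.1 a b x y
    have h3 : (0:ℝ) ≤ 1 - μ := by linarith
    positivity
  · intro x y
    simp_rw [Finset.sum_add_distrib, ← Finset.mul_sum]
    rw [hP.2 x y, hP'.2 x y]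
    ring

/-- A convex mixture of local behaviors is local. -/
lemma IsLocal.mymix {r s : ℕ} {Q Q' : Fin r → Fin r → Fin s → Fin s → ℝ}
    (hQ : IsLocal Q) (hQ' : IsLocal Q')
    (μ : ℝ) (hμ0 : 0 ≤ μ) (hμ1 : μ ≤ 1) :
    IsLocal (fun a b x y => μ * Q a b x y + (1 - μ) * Q' a b x y) := by
  obtain ⟨n, q, PA, PB, ⟨hq0, hq1⟩, hPA, hPB, hprod⟩ := hQ
  obtain ⟨m, q', PA', PB', ⟨hq0', hq1'⟩, hPA', hPB', hprod'⟩ := hQ'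
  have h3 : (0:ℝ) ≤ 1 - μ := by linarith
  refine ⟨n + m, Fin.append (fun l => μ * q l) (fun l => (1 - μ) * q' l),
    fun a x => Fin.append (fun l => PA a x l) (fun l => PA' a x l),
    fun b y => Fin.append (fun l => PB b y l) (fun l => PB' b y l),
    ⟨?_, ?_⟩, ?_, ?_, ?_⟩
  · intro l
    refine Fin.addCases (fun i => ?_) (fun i => ?_) l
    · simp only [Fin.append_left]
      exact mul_nonneg hμ0 (hq0 i)
    · simp only [Fin.append_right]
      exact mul_nonneg h3 (hq0' i)
  · rw [Fin.sum_univ_add]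
    simp only [Fin.append_left, Fin.append_right]
    rw [← Finset.mul_sum, ← Finset.mul_sum, hq1, hq1']
    ring
  · intro x l
    refine Fin.addCases (fun i => ?_) (fun i => ?_) l
    · simp only [Fin.append_left]
      exact hPA x i
    · simp only [Fin.append_right]
      exact hPA' x i
  · intro y l
    refine Fin.addCases (fun i => ?_) (fun i => ?_) l
    · simp only [Fin.append_left]
      exact hPB y i
    · simp only [Fin.append_right]
      exact hPB' y i
  · intro a b x y
    rw [Fin.sum_univ_add]
    simp only [Fin.append_left, Fin.append_right]
    rw [hprod a b x y, hprod' a b x y, Finset.mul_sum, Finset.mul_sum]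
    congr 1 <;> · apply Finset.sum_congr rfl; intros; ring

end Aux

/-- convexity of the relative entropy of nonlocality. -/
theorem Snl_convex {r s : ℕ}
    (P P' : Fin r → Fin r → Fin s → Fin s → ℝ)
    (hP : IsBehavior P) (hP' : IsBehavior P')
    (μ : ℝ) (hμ0 : 0 ≤ μ) (hμ1 : μ ≤ 1) :
    Snl (fun a b x y => μ * P a b x y + (1 - μ) * P' a b x y) ≤
      ENNReal.ofReal μ * Snl P + ENNReal.ofReal (1 - μ) * Snl P' := by
  rcases eq_or_lt_of_le hμ0 with rfl | hμpos
  · simp only [zero_mul, zero_add, sub_zero, one_mul, ENNReal.ofReal_zero,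
      ENNReal.ofReal_one]
    simp
  rcases eq_or_lt_of_le hμ1 with rfl | hμlt
  · simp only [one_mul, sub_self, zero_mul, add_zero, ENNReal.ofReal_one,
      ENNReal.ofReal_zero]
    simp
  have h1μ : (0:ℝ) < 1 - μ := by linarith
  have hc₁0 : ENNReal.ofReal μ ≠ 0 := ne_of_gt (ENNReal.ofReal_pos.2 hμpos)
  have hc₂0 : ENNReal.ofReal (1 - μ) ≠ 0 := ne_of_gt (ENNReal.ofReal_pos.2 h1μ)
  by_cases hex : ∃ Q : Fin r → Fin r → Fin s → Fin s → ℝ, IsBehavior Q ∧ IsLocal Q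
  · have key : ∀ Q, (IsBehavior Q ∧ IsLocal Q) → ∀ Q', (IsBehavior Q' ∧ IsLocal Q') →
        Snl (fun a b x y => μ * P a b x y + (1 - μ) * P' a b x y) ≤
          ENNReal.ofReal μ * Sb P Q + ENNReal.ofReal (1 - μ) * Sb P' Q' := by
      intro Q hQ Q' hQ'
      have hloc : IsBehavior (fun a b x y => μ * Q a b x y + (1 - μ) * Q' a b x y) ∧
          IsLocal (fun a b x y => μ * Q a b x y + (1 - μ) * Q' a b x y) :=
        ⟨IsBehavior.mymix hQ.1 hQ'.1 μ hμ0 hμ1, IsLocal.mymix hQ.2 hQ'.2 μ hμ0 hμ1⟩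
      have h0 : Snl (fun a b x y => μ * P a b x y + (1 - μ) * P' a b x y) ≤
          Sb (fun a b x y => μ * P a b x y + (1 - μ) * P' a b x y)
             (fun a b x y => μ * Q a b x y + (1 - μ) * Q' a b x y) := by
        unfold Snl
        exact iInf₂_le (fun a b x y => μ * Q a b x y + (1 - μ) * Q' a b x y) hloc
      exact le_trans h0 (Sb_convex P P' Q Q' hP.1 hP'.1 hQ.1.1 hQ'.1.1 μ hμpos hμlt)
    have step : Snl (fun a b x y => μ * P a b x y + (1 - μ) * P' a b x y) ≤
        ⨅ (Q : Fin r → Fin r → Fin s → Fin s → ℝ) (_ : IsBehavior Q ∧ IsLocal Q)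
          (Q' : Fin r → Fin r → Fin s → Fin s → ℝ) (_ : IsBehavior Q' ∧ IsLocal Q'),
          (ENNReal.ofReal μ * Sb P Q + ENNReal.ofReal (1 - μ) * Sb P' Q') :=
      le_iInf fun Q => le_iInf fun hQ => le_iInf fun Q' => le_iInf fun hQ' =>
        key Q hQ Q' hQ'
    refine step.trans_eq ?_
    rw [Snl, Snl]
    rw [ENNReal.mul_iInf_of_ne hc₁0 ENNReal.ofReal_ne_top,
      ENNReal.mul_iInf_of_ne hc₂0 ENNReal.ofReal_ne_top]
    simp_rw [ENNReal.mul_iInf_of_ne hc₁0 ENNReal.ofReal_ne_top,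
      ENNReal.mul_iInf_of_ne hc₂0 ENNReal.ofReal_ne_top,
      ENNReal.iInf_add, ENNReal.add_iInf]
  · have htop : ∀ X : Fin r → Fin r → Fin s → Fin s → ℝ, Snl X = ⊤ := by
      intro X
      rw [Snl, iInf_eq_top]
      intro Q
      rw [iInf_eq_top]
      intro h
      exact absurd ⟨Q, h⟩ hex
    rw [htop P, ENNReal.mul_top hc₁0, top_add]
    exact le_top
end

section
/- The statistical strength with correlated inputs equals the relative entropy of nonlocality: for every no-signaling behavior P in the (r,s) Bell scenario, the supremum over probability distributions D on Fin s × Fin s of the infimum over local behaviors Q of ∑_{x,y} D(x,y)·S(P(·,·|x,y)‖Q(·,·|x,y)) equals the infimum over local behaviors Q of the maximum over (x,y) of S(P(·,·|x,y)‖Q(·,·|x,y)); i.e. S_c(P) = S_nl(P). -/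
open scoped ENNReal
open Finset

open scoped NNReal

/-!
An average is at most a maximum, so `S_c(P) ≤ S_nl(P)`. Conversely, suppose every local
behavior `Q` has some input pair with `S(P(·,·|x,y)‖Q(·,·|x,y)) > v`. The vectors in `ℝ^(s×s)`
dominating `(S(P(·,·|x,y)‖Q(·,·|x,y)))_{x,y}` for some full-support local `Q` form a convex
upper set (local behaviors are convex and relative entropy is convex in its second argument)
that misses the open orthant `{z | z < v}`. A separating functional is then nonnegative, and its
normalisation is an input distribution `D` with `∑ D(x,y) S(P‖Q) ≥ v` for all such `Q`. An
arbitrary local `Q` is reduced to the full-support case by mixing in a little of the uniform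
behavior, which raises each relative entropy by at most `-log` of the weight kept on `Q`.
-/

section RelativeEntropy

variable {Z : Type*} [Fintype Z]

noncomputable def relEntSum (p q : Z → ℝ) : ℝ :=
  ∑ z, p z * Real.log (p z / q z)

theorem relEnt_eq_ofReal_relEntSum {p q : Z → ℝ} (h : ∀ z, p z ≠ 0 → q z ≠ 0) :
    relEnt p q = ENNReal.ofReal (relEntSum p q) := by
  rw [relEnt, if_neg (by push Not; exact h), relEntSum]

theorem relEntSum_smul_add_le {p q₁ q₂ : Z → ℝ} (hp : ∀ z, 0 ≤ p z) (hq₁ : ∀ z, 0 < q₁ z)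
    (hq₂ : ∀ z, 0 < q₂ z) {a b : ℝ} (ha : 0 ≤ a) (hb : 0 ≤ b) (hab : a + b = 1) :
    relEntSum p (a • q₁ + b • q₂) ≤ a * relEntSum p q₁ + b * relEntSum p q₂ := by
  simp only [relEntSum, Finset.mul_sum, ← Finset.sum_add_distrib]
  refine Finset.sum_le_sum fun z _ => ?_
  obtain hpz | hpz := (hp z).eq_or_lt
  · simp [← hpz]
  have hmix : 0 < a * q₁ z + b * q₂ z := convex_Ioi (0 : ℝ) (hq₁ z) (hq₂ z) ha hb hab
  have hlog : a * Real.log (q₁ z) + b * Real.log (q₂ z) ≤ Real.log (a * q₁ z + b * q₂ z) := by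
    simpa using strictConcaveOn_log_Ioi.concaveOn.2 (hq₁ z) (hq₂ z) ha hb hab
  simp only [Pi.add_apply, Pi.smul_apply, smul_eq_mul]
  rw [Real.log_div hpz.ne' hmix.ne', Real.log_div hpz.ne' (hq₁ z).ne',
    Real.log_div hpz.ne' (hq₂ z).ne']
  have hb' : b = 1 - a := by linarith
  subst hb'
  nlinarith [mul_le_mul_of_nonneg_left hlog hpz.le]

theorem ofReal_relEntSum_smul_add_le {p q u : Z → ℝ} (hp : IsDist p) (hq : ∀ z, 0 ≤ q z)
    (hu : ∀ z, 0 ≤ u z) {a b : ℝ} (ha : 0 < a) (hb : 0 ≤ b) :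
    ENNReal.ofReal (relEntSum p (a • q + b • u)) ≤ relEnt p q + ENNReal.ofReal (-Real.log a) := by
  by_cases hsupp : ∀ z, p z ≠ 0 → q z ≠ 0
  swap
  · push Not at hsupp
    rw [relEnt, if_pos hsupp, top_add]
    exact le_top
  rw [relEnt_eq_ofReal_relEntSum hsupp]
  refine (ENNReal.ofReal_le_ofReal ?_).trans ENNReal.ofReal_add_le
  have hlog : -Real.log a = ∑ z, p z * -Real.log a := by rw [← Finset.sum_mul, hp.2, one_mul]
  rw [hlog, relEntSum, relEntSum, ← Finset.sum_add_distrib]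
  refine Finset.sum_le_sum fun z _ => ?_
  obtain hpz | hpz := (hp.1 z).eq_or_lt
  · simp [← hpz]
  have hqz : 0 < q z := (hq z).lt_of_ne (hsupp z hpz.ne').symm
  have hle : a * q z ≤ a * q z + b * u z := le_add_of_nonneg_right (mul_nonneg hb (hu z))
  have hmono := Real.log_le_log (mul_pos ha hqz) hle
  rw [Real.log_mul ha.ne' hqz.ne'] at hmono
  simp only [Pi.add_apply, Pi.smul_apply, smul_eq_mul]
  rw [Real.log_div hpz.ne' ((mul_pos ha hqz).trans_le hle).ne', Real.log_div hpz.ne' hqz.ne']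
  nlinarith [mul_le_mul_of_nonneg_left hmono hpz.le]

end RelativeEntropy

theorem exists_isDist_le_sum_mul_of_convex {ι : Type*} [Fintype ι]
    {A : Set (ι → ℝ)} (hconv : Convex ℝ A) (hup : IsUpperSet A) (hne : A.Nonempty) {v : ℝ}
    (hv : ∀ z ∈ A, ∃ t, v ≤ z t) :
    ∃ D : ι → ℝ, IsDist D ∧ ∀ z ∈ A, v ≤ ∑ t, D t * z t := by
  classical
  set B : Set (ι → ℝ) := Set.univ.pi fun _ => Set.Iio v
  have hB : ∀ c < v, (fun _ => c) ∈ B := fun c hc t _ => hc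
  have hdisj : Disjoint B A :=
    Set.disjoint_left.2 fun z hzB hzA =>
      let ⟨t, ht⟩ := hv z hzA; (hzB t (Set.mem_univ t)).not_ge ht
  obtain ⟨f, u, hfB, hfA⟩ := geometric_hahn_banach_open
    (convex_pi fun _ _ => convex_Iio v) (isOpen_set_pi Set.finite_univ fun _ _ => isOpen_Iio)
    hconv hdisj
  set w : ι → ℝ := fun t => f (Pi.single t 1)
  have hf : ∀ z, f z = ∑ t, z t * w t := fun z => by
    conv_lhs => rw [pi_eq_sum_univ' z, map_sum]
    simp only [map_smul, smul_eq_mul, w]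
  obtain ⟨a, ha⟩ := hne
  -- `A` is closed under increasing a coordinate, so `f` cannot decrease along it.
  have hw : ∀ t, 0 ≤ w t := by
    intro t
    by_contra! hneg
    have hmem : a + ((f a - u + 1) / -w t) • Pi.single t 1 ∈ A :=
      hup (le_add_of_nonneg_right (smul_nonneg (div_nonneg (by linarith [hfA a ha])
        (by linarith)) (Pi.single_nonneg.2 zero_le_one))) ha
    have := hfA _ hmem
    rw [map_add, map_smul, smul_eq_mul, div_mul_eq_mul_div, div_neg, mul_div_assoc,
      div_self hneg.ne, mul_one] at this
    linarith
  set S := ∑ t, w t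
  have hfconst : ∀ c, f (fun _ => c) = c * S := fun c => by rw [hf, Finset.mul_sum]
  have hS : 0 < S := by
    refine (Finset.sum_nonneg fun t _ => hw t).lt_of_ne fun h0 => ?_
    have hw0 := (Finset.sum_eq_zero_iff_of_nonneg fun t _ => hw t).1 h0.symm
    have h1 := hfB _ (hB (v - 1) (by linarith))
    have h2 := hfA a ha
    rw [hfconst, show S = 0 from h0.symm, mul_zero] at h1
    rw [hf, Finset.sum_eq_zero fun t ht => by rw [hw0 t ht, mul_zero]] at h2
    linarith
  have hvu : v ≤ u / S := le_of_forall_lt fun c hc => by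
    rw [lt_div_iff₀ hS, ← hfconst]
    exact hfB _ (hB c hc)
  refine ⟨fun t => w t / S, ⟨fun t => div_nonneg (hw t) hS.le, ?_⟩, fun z hz => ?_⟩
  · rw [← Finset.sum_div, div_self hS.ne']
  · calc v ≤ u / S := hvu
      _ ≤ f z / S := by gcongr; exact hfA z hz
      _ = ∑ t, w t / S * z t := by
        rw [hf, Finset.sum_div]; exact Finset.sum_congr rfl fun t _ => by ring

section Behaviors

variable {r s : ℕ}

theorem isDist_outDist {P : Fin r → Fin r → Fin s → Fin s → ℝ} (hP : IsBehavior P) (x y : Fin s) :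
    IsDist (outDist P x y) :=
  ⟨fun ab => hP.1 ab.1 ab.2 x y, by rw [Fintype.sum_prod_type]; exact hP.2 x y⟩

theorem outDist_smul_add (a b : ℝ) (Q₁ Q₂ : Fin r → Fin r → Fin s → Fin s → ℝ) (x y : Fin s) :
    outDist (a • Q₁ + b • Q₂) x y = a • outDist Q₁ x y + b • outDist Q₂ x y :=
  rfl

theorem convex_setOf_isBehavior :
    Convex ℝ {Q : Fin r → Fin r → Fin s → Fin s → ℝ | IsBehavior Q} := by
  intro Q₁ h₁ Q₂ h₂ a b ha hb hab
  refine ⟨fun α β x y => ?_, fun x y => ?_⟩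
  · simpa using convex_Ici (0 : ℝ) (h₁.1 α β x y) (h₂.1 α β x y) ha hb hab
  · simp [Finset.sum_add_distrib, ← Finset.mul_sum, h₁.2, h₂.2, hab]

theorem convex_setOf_isLocal :
    Convex ℝ {Q : Fin r → Fin r → Fin s → Fin s → ℝ | IsLocal Q} := by
  rintro Q₁ ⟨n, q, PA, PB, hq, hPA, hPB, hQ₁⟩ Q₂ ⟨m, q', PA', PB', hq', hPA', hPB', hQ₂⟩
    a b ha hb hab
  refine ⟨n + m, Fin.addCases (fun i => a * q i) (fun j => b * q' j),
    fun c x => Fin.addCases (PA c x) (PA' c x), fun c y => Fin.addCases (PB c y) (PB' c y),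
    ⟨Fin.addCases (fun i => by simpa using mul_nonneg ha (hq.1 i))
      (fun j => by simpa using mul_nonneg hb (hq'.1 j)), ?_⟩,
    fun x => Fin.addCases (fun i => by simpa using hPA x i) (fun j => by simpa using hPA' x j),
    fun y => Fin.addCases (fun i => by simpa using hPB y i) (fun j => by simpa using hPB' y j),
    fun c d x y => ?_⟩
  · simp [Fin.sum_univ_add, ← Finset.mul_sum, hq.2, hq'.2, hab]
  · simp [hQ₁, hQ₂, Fin.sum_univ_add, Finset.mul_sum, mul_assoc]

def posLocalBehaviors (r s : ℕ) : Set (Fin r → Fin r → Fin s → Fin s → ℝ) :=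
  {Q | IsBehavior Q ∧ IsLocal Q ∧ ∀ a b x y, 0 < Q a b x y}

theorem convex_posLocalBehaviors : Convex ℝ (posLocalBehaviors r s) := by
  refine convex_setOf_isBehavior.inter (convex_setOf_isLocal.inter ?_)
  intro Q₁ h₁ Q₂ h₂ a b ha hb hab α β x y
  simpa using convex_Ioi (0 : ℝ) (h₁ α β x y) (h₂ α β x y) ha hb hab

theorem posLocalBehaviors_nonempty (hr : 0 < r) : (posLocalBehaviors r s).Nonempty := by
  have hr' : (0 : ℝ) < r := Nat.cast_pos.2 hr
  have hsum : ∑ _ : Fin r, (r : ℝ)⁻¹ = 1 := by simp [hr'.ne']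
  refine ⟨fun _ _ _ _ => (r : ℝ)⁻¹ * (r : ℝ)⁻¹, ⟨fun _ _ _ _ => by positivity, fun _ _ => ?_⟩,
    ⟨1, fun _ => 1, fun _ _ _ => (r : ℝ)⁻¹, fun _ _ _ => (r : ℝ)⁻¹, by simp [IsDist],
      fun _ _ => ⟨fun _ => by positivity, hsum⟩, fun _ _ => ⟨fun _ => by positivity, hsum⟩,
      by simp⟩, fun _ _ _ _ => by positivity⟩
  simp only [← Finset.sum_mul, hsum, one_mul]

end Behaviors

section Nonlocality

variable {r s : ℕ} {P : Fin r → Fin r → Fin s → Fin s → ℝ}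

theorem relEnt_le_Sb (Q : Fin r → Fin r → Fin s → Fin s → ℝ) (t : Fin s × Fin s) :
    relEnt (outDist P t.1 t.2) (outDist Q t.1 t.2) ≤ Sb P Q :=
  Finset.le_sup (f := fun t : Fin s × Fin s => relEnt (outDist P t.1 t.2) (outDist Q t.1 t.2))
    (Finset.mem_univ t)

theorem sum_mul_relEnt_le_Sb {D : Fin s × Fin s → ℝ} (hD : IsDist D)
    (Q : Fin r → Fin r → Fin s → Fin s → ℝ) :
    ∑ t, ENNReal.ofReal (D t) * relEnt (outDist P t.1 t.2) (outDist Q t.1 t.2) ≤ Sb P Q :=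
  calc ∑ t, ENNReal.ofReal (D t) * relEnt (outDist P t.1 t.2) (outDist Q t.1 t.2)
      ≤ ∑ t, ENNReal.ofReal (D t) * Sb P Q :=
        Finset.sum_le_sum fun t _ => mul_le_mul_right (relEnt_le_Sb Q t) _
    _ = Sb P Q := by
        rw [← Finset.sum_mul, ← ENNReal.ofReal_sum_of_nonneg fun t _ => hD.1 t, hD.2,
          ENNReal.ofReal_one, one_mul]

theorem exists_mem_posLocalBehaviors_relEntSum_le (hr : 0 < r) (hP : IsBehavior P)
    {Q : Fin r → Fin r → Fin s → Fin s → ℝ} (hQ : IsBehavior Q ∧ IsLocal Q) {ε : ℝ}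
    (hε : 0 < ε) : ∃ Q' ∈ posLocalBehaviors r s, ∀ t : Fin s × Fin s,
      ENNReal.ofReal (relEntSum (outDist P t.1 t.2) (outDist Q' t.1 t.2)) ≤
        relEnt (outDist P t.1 t.2) (outDist Q t.1 t.2) + ENNReal.ofReal ε := by
  obtain ⟨U, hU, hUloc, hUpos⟩ := posLocalBehaviors_nonempty (s := s) hr
  set a := Real.exp (-ε)
  have ha : 0 < a := Real.exp_pos _
  have hb : 0 < 1 - a := sub_pos.2 (Real.exp_lt_one_iff.2 (neg_lt_zero.2 hε))
  refine ⟨a • Q + (1 - a) • U, ⟨convex_setOf_isBehavior hQ.1 hU ha.le hb.le (by ring),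
    convex_setOf_isLocal hQ.2 hUloc ha.le hb.le (by ring), fun α β x y => ?_⟩, fun t => ?_⟩
  · simpa using add_pos_of_nonneg_of_pos (mul_nonneg ha.le (hQ.1.1 α β x y))
      (mul_pos hb (hUpos α β x y))
  · rw [outDist_smul_add]
    simpa only [a, Real.log_exp, neg_neg] using ofReal_relEntSum_smul_add_le
      (q := outDist Q t.1 t.2) (u := outDist U t.1 t.2) (isDist_outDist hP t.1 t.2)
      (fun z => hQ.1.1 z.1 z.2 t.1 t.2) (fun z => hU.1 z.1 z.2 t.1 t.2) ha hb.le

theorem exists_isDist_le_sum_mul_relEntSum (hr : 0 < r) (hP : IsBehavior P) {v : ℝ}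
    (hv : ∀ Q ∈ posLocalBehaviors r s, ∃ t : Fin s × Fin s,
      v ≤ relEntSum (outDist P t.1 t.2) (outDist Q t.1 t.2)) :
    ∃ D : Fin s × Fin s → ℝ, IsDist D ∧ ∀ Q ∈ posLocalBehaviors r s,
      v ≤ ∑ t, D t * relEntSum (outDist P t.1 t.2) (outDist Q t.1 t.2) := by
  let A : Set (Fin s × Fin s → ℝ) := {z | ∃ Q ∈ posLocalBehaviors r s,
    ∀ t, relEntSum (outDist P t.1 t.2) (outDist Q t.1 t.2) ≤ z t}
  have hconv : Convex ℝ A := by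
    rintro z₁ ⟨Q₁, hQ₁, hz₁⟩ z₂ ⟨Q₂, hQ₂, hz₂⟩ a b ha hb hab
    refine ⟨a • Q₁ + b • Q₂, convex_posLocalBehaviors hQ₁ hQ₂ ha hb hab, fun t => ?_⟩
    rw [outDist_smul_add]
    refine (relEntSum_smul_add_le (isDist_outDist hP t.1 t.2).1
      (fun z => hQ₁.2.2 z.1 z.2 t.1 t.2) (fun z => hQ₂.2.2 z.1 z.2 t.1 t.2) ha hb hab).trans ?_
    simp only [Pi.add_apply, Pi.smul_apply, smul_eq_mul]
    exact add_le_add (mul_le_mul_of_nonneg_left (hz₁ t) ha) (mul_le_mul_of_nonneg_left (hz₂ t) hb)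
  have hup : IsUpperSet A := fun z z' hzz' ⟨Q, hQ, hz⟩ => ⟨Q, hQ, fun t => (hz t).trans (hzz' t)⟩
  have hne : A.Nonempty :=
    let ⟨Q, hQ⟩ := posLocalBehaviors_nonempty (s := s) hr
    ⟨_, Q, hQ, fun _ => le_rfl⟩
  obtain ⟨D, hD, hDA⟩ := exists_isDist_le_sum_mul_of_convex hconv hup hne
    fun z ⟨Q, hQ, hz⟩ => let ⟨t, ht⟩ := hv Q hQ; ⟨t, ht.trans (hz t)⟩
  exact ⟨D, hD, fun Q hQ => hDA _ ⟨Q, hQ, fun _ => le_rfl⟩⟩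

theorem exists_isDist_le_sum_mul_relEnt (hr : 0 < r) (hP : IsBehavior P) {v : ℝ≥0}
    (hv : ∀ Q, IsBehavior Q ∧ IsLocal Q → (v : ℝ≥0∞) < Sb P Q) :
    ∃ D : Fin s × Fin s → ℝ, IsDist D ∧ ∀ Q, IsBehavior Q ∧ IsLocal Q →
      (v : ℝ≥0∞) ≤ ∑ t, ENNReal.ofReal (D t) * relEnt (outDist P t.1 t.2) (outDist Q t.1 t.2) := by
  have hvpos : ∀ Q ∈ posLocalBehaviors r s, ∃ t : Fin s × Fin s,
      (v : ℝ) ≤ relEntSum (outDist P t.1 t.2) (outDist Q t.1 t.2) := by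
    rintro Q ⟨hQ, hQloc, hQpos⟩
    obtain ⟨t, -, ht⟩ := Finset.lt_sup_iff.1 (hv Q ⟨hQ, hQloc⟩)
    rw [relEnt_eq_ofReal_relEntSum fun z _ => (hQpos z.1 z.2 t.1 t.2).ne',
      ← ENNReal.ofReal_coe_nnreal, ENNReal.ofReal_lt_ofReal_iff_of_nonneg v.coe_nonneg] at ht
    exact ⟨t, ht.le⟩
  obtain ⟨D, hD, hDv⟩ := exists_isDist_le_sum_mul_relEntSum hr hP hvpos
  refine ⟨D, hD, fun Q hQ => ENNReal.le_of_forall_pos_le_add fun ε hε _ => ?_⟩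
  obtain ⟨Q', hQ', hQ'Q⟩ := exists_mem_posLocalBehaviors_relEntSum_le hr hP hQ hε
  calc (v : ℝ≥0∞)
      = ENNReal.ofReal v := (ENNReal.ofReal_coe_nnreal).symm
    _ ≤ ENNReal.ofReal (∑ t, D t * relEntSum (outDist P t.1 t.2) (outDist Q' t.1 t.2)) :=
        ENNReal.ofReal_le_ofReal (hDv Q' hQ')
    _ ≤ ∑ t, ENNReal.ofReal (D t) *
          ENNReal.ofReal (relEntSum (outDist P t.1 t.2) (outDist Q' t.1 t.2)) := by
        refine (Finset.le_sum_of_subadditive _ ENNReal.ofReal_zero.le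
          (fun _ _ => ENNReal.ofReal_add_le) _ _).trans_eq ?_
        exact Finset.sum_congr rfl fun t _ => ENNReal.ofReal_mul (hD.1 t)
    _ ≤ ∑ t, ENNReal.ofReal (D t) *
          (relEnt (outDist P t.1 t.2) (outDist Q t.1 t.2) + ENNReal.ofReal ε) :=
        Finset.sum_le_sum fun t _ => mul_le_mul_right (hQ'Q t) _
    _ = ∑ t, ENNReal.ofReal (D t) * relEnt (outDist P t.1 t.2) (outDist Q t.1 t.2) + ε := by
        rw [← ENNReal.ofReal_coe_nnreal]
        simp only [mul_add, Finset.sum_add_distrib, ← Finset.sum_mul,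
          ← ENNReal.ofReal_sum_of_nonneg fun t _ => hD.1 t, hD.2, ENNReal.ofReal_one, one_mul]

end Nonlocality

theorem Sc_eq_Snl_general {r s : ℕ} (hr : 0 < r)
    (P : Fin r → Fin r → Fin s → Fin s → ℝ)
    (hP : IsBehavior P) :
    (⨆ (D : Fin s × Fin s → ℝ) (_ : IsDist D),
        ⨅ (Q : Fin r → Fin r → Fin s → Fin s → ℝ)
          (_ : IsBehavior Q ∧ IsLocal Q),
          ∑ x, ∑ y, ENNReal.ofReal (D (x, y)) *
            relEnt (outDist P x y) (outDist Q x y))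
      = Snl P := by
  simp only [← Fintype.sum_prod_type', Prod.mk.eta]
  refine le_antisymm (iSup₂_le fun D hD => le_iInf₂ fun Q hQ =>
    (iInf₂_le Q hQ).trans (sum_mul_relEnt_le_Sb hD Q)) ?_
  refine ENNReal.le_of_forall_nnreal_lt fun v hv => ?_
  obtain ⟨D, hD, hDv⟩ := exists_isDist_le_sum_mul_relEnt hr hP
    fun Q hQ => hv.trans_le (iInf₂_le Q hQ)
  exact le_iSup₂_of_le D hD (le_iInf₂ hDv)

/-- the statistical strength with correlated inputs equals the
relative entropy of nonlocality. -/
theorem Sc_eq_Snl {r s : ℕ} (hr : 0 < r) (hs : 0 < s)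
    (P : Fin r → Fin r → Fin s → Fin s → ℝ)
    (hP : IsBehavior P) (hPns : NoSignaling P) :
    (⨆ (D : Fin s × Fin s → ℝ) (_ : IsDist D),
        ⨅ (Q : Fin r → Fin r → Fin s → Fin s → ℝ)
          (_ : IsBehavior Q ∧ IsLocal Q),
          ∑ x, ∑ y, ENNReal.ofReal (D (x, y)) *
            relEnt (outDist P x y) (outDist Q x y))
      = Snl P :=
  Sc_eq_Snl_general hr P hP
end
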